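/- arXiv:2201.10585 — 8 statements merged into one kernel-verified Lean document; each statement's English description precedes it below -/
import Mathlib

section
/- For a g-regular (K,L,F,Z,S) EPDA, the regularity satisfies g ≤ L + KZ/F. -/
open scoped Classical

/-- A `(K,L,F,Z,S)` extended placement delivery array (EPDA): an `F × K` array
with entries `none` (the star `★`) or `some s` with `s ∈ [S]`, satisfying
conditions C1–C4. -/
def IsEPDA (L Z : ℕ) {K F S : ℕ} (A : Fin F → Fin K → Option (Fin S)) : Prop :=
  -- C1: the star appears exactly `Z` times in each column
  (∀ k : Fin K, (Finset.univ.filter (fun j => A j k = none)).card = Z) ∧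
  -- C2: every integer in `[S]` occurs at least once
  (∀ s : Fin S, ∃ j k, A j k = some s) ∧
  -- C3: no integer appears more than once in any column
  (∀ (k : Fin K) (j₁ j₂ : Fin F) (s : Fin S),
    A j₁ k = some s → A j₂ k = some s → j₁ = j₂) ∧
  -- C4: in the subarray `A^(s)` (rows and columns containing `s`),
  -- no row contains more than `L` integer entries
  (∀ (s : Fin S) (j : Fin F), (∃ k, A j k = some s) →
    (Finset.univ.filter
      (fun k : Fin K => (∃ j', A j' k = some s) ∧ A j k ≠ none)).card ≤ L)

/-- A `g`-regular EPDA: each integer in `[S]` appears exactly `g` times. -/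
def IsRegularEPDA (g : ℕ) {K F S : ℕ} (A : Fin F → Fin K → Option (Fin S)) : Prop :=
  ∀ s : Fin S, (Finset.univ.filter (fun p : Fin F × Fin K => A p.1 p.2 = some s)).card = g

/-- For a `g`-regular `(K,L,F,Z,S)` EPDA, `g ≤ L + KZ/F`. -/
theorem stmt1 {K L F Z S g : ℕ} (A : Fin F → Fin K → Option (Fin S))
    (hF : 0 < F) (hS : 0 < S)
    (hA : IsEPDA L Z A) (hg : IsRegularEPDA g A) :
    (g : ℚ) ≤ (L : ℚ) + (K : ℚ) * (Z : ℚ) / (F : ℚ) := by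
  obtain ⟨hC1, hC2, hC3, hC4⟩ := hA
  -- the set of columns containing `s` has exactly `g` elements
  have hCs : ∀ s : Fin S,
      (Finset.univ.filter (fun k : Fin K => ∃ j, A j k = some s)).card = g := by
    intro s
    rw [← hg s]
    symm
    apply Finset.card_bij (fun p _ => p.2)
    · intro p hp
      simp only [Finset.mem_filter, Finset.mem_univ, true_and] at hp ⊢
      exact ⟨p.1, hp⟩
    · intro p1 h1 p2 h2 h
      simp only [Finset.mem_filter, Finset.mem_univ, true_and] at h1 h2
      have h1' : A p1.1 p2.2 = some s := by rw [← h]; exact h1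
      have := hC3 p2.2 p1.1 p2.1 s h1' h2
      exact Prod.ext this h
    · intro k hk
      simp only [Finset.mem_filter, Finset.mem_univ, true_and] at hk
      obtain ⟨j, hj⟩ := hk
      exact ⟨(j, k), by simp [hj], rfl⟩
  -- g ≤ K
  have hgK : g ≤ K := by
    obtain ⟨s0⟩ : Nonempty (Fin S) := ⟨⟨0, hS⟩⟩
    calc g = (Finset.univ.filter (fun k : Fin K => ∃ j, A j k = some s0)).card :=
          (hCs s0).symm
      _ ≤ (Finset.univ : Finset (Fin K)).card := Finset.card_filter_le _ _
      _ = K := by simp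
  -- every row has at least g - L stars
  have hrow : ∀ j : Fin F,
      g ≤ L + (Finset.univ.filter (fun k : Fin K => A j k = none)).card := by
    intro j
    by_cases h : ∃ s k, A j k = some s
    · obtain ⟨s, k0, hk0⟩ := h
      have h4 := hC4 s j ⟨k0, hk0⟩
      have hsub : (Finset.univ.filter (fun k : Fin K => ∃ j', A j' k = some s)) ⊆
          (Finset.univ.filter
            (fun k : Fin K => (∃ j', A j' k = some s) ∧ A j k ≠ none)) ∪
          (Finset.univ.filter (fun k : Fin K => A j k = none)) := by
        intro k hk
        simp only [Finset.mem_filter, Finset.mem_univ, true_and, Finset.mem_union] at hk ⊢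
        by_cases hn : A j k = none
        · exact Or.inr hn
        · exact Or.inl ⟨hk, hn⟩
      calc g = (Finset.univ.filter (fun k : Fin K => ∃ j', A j' k = some s)).card :=
            (hCs s).symm
        _ ≤ ((Finset.univ.filter
              (fun k : Fin K => (∃ j', A j' k = some s) ∧ A j k ≠ none)) ∪
            (Finset.univ.filter (fun k : Fin K => A j k = none))).card :=
            Finset.card_le_card hsub
        _ ≤ (Finset.univ.filter
              (fun k : Fin K => (∃ j', A j' k = some s) ∧ A j k ≠ none)).card +
            (Finset.univ.filter (fun k : Fin K => A j k = none)).card :=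
            Finset.card_union_le _ _
        _ ≤ L + (Finset.univ.filter (fun k : Fin K => A j k = none)).card :=
            Nat.add_le_add_right h4 _
    · push_neg at h
      have hall : (Finset.univ.filter (fun k : Fin K => A j k = none)) = Finset.univ := by
        apply Finset.filter_true_of_mem
        intro k _
        cases hAk : A j k with
        | none => rfl
        | some s => exact absurd hAk (h s k)
      rw [hall]
      simp only [Finset.card_univ, Fintype.card_fin]
      omega
  -- total number of stars is K * Z
  have hsum : ∑ j : Fin F, (Finset.univ.filter (fun k : Fin K => A j k = none)).card
      = K * Z := by
    have : ∀ j : Fin F, (Finset.univ.filter (fun k : Fin K => A j k = none)).card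
        = ∑ k : Fin K, if A j k = none then 1 else 0 := by
      intro j; rw [Finset.card_filter]
    simp_rw [this]
    rw [Finset.sum_comm]
    have : ∀ k : Fin K, (∑ j : Fin F, if A j k = none then 1 else 0) = Z := by
      intro k; rw [← Finset.card_filter]; exact hC1 k
    simp_rw [this]
    simp [mul_comm]
  -- main counting inequality
  have key : F * g ≤ F * L + K * Z := by
    calc F * g = ∑ _j : Fin F, g := by simp [mul_comm]
      _ ≤ ∑ j : Fin F, (L + (Finset.univ.filter (fun k : Fin K => A j k = none)).card) :=
          Finset.sum_le_sum (fun j _ => hrow j)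
      _ = F * L + K * Z := by
          rw [Finset.sum_add_distrib, hsum]
          simp [mul_comm]
  -- convert to ℚ
  have hFQ : (0 : ℚ) < (F : ℚ) := by exact_mod_cast hF
  rw [← sub_le_iff_le_add', le_div_iff₀ hFQ]
  have keyQ : (F : ℚ) * g ≤ F * L + K * Z := by exact_mod_cast key
  nlinarith [keyQ]
end

section
/- The u-row concatenation of a (K,F,Z,S) PDA is a (uK, u, F, Z, S) EPDA. -/
open scoped Classical

/-- A `(K,F,Z,S)` placement delivery array (PDA): conditions D1–D3. -/
def IsPDA (Z : ℕ) {K F S : ℕ} (P : Fin F → Fin K → Option (Fin S)) : Prop :=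
  -- D1: the star appears exactly `Z` times in each column
  (∀ k : Fin K, (Finset.univ.filter (fun j => P j k = none)).card = Z) ∧
  -- D2: every integer in `[S]` occurs at least once
  (∀ s : Fin S, ∃ j k, P j k = some s) ∧
  -- D3: two distinct cells sharing an integer lie in distinct rows and columns,
  -- and the two cross positions are stars
  (∀ (j₁ j₂ : Fin F) (k₁ k₂ : Fin K) (s : Fin S),
    P j₁ k₁ = some s → P j₂ k₂ = some s → (j₁, k₁) ≠ (j₂, k₂) →
    j₁ ≠ j₂ ∧ k₁ ≠ k₂ ∧ P j₁ k₂ = none ∧ P j₂ k₁ = none)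

/-- The `u`-row concatenation of an `F × K` array: `u` copies of the array
placed side by side, giving an `F × (uK)` array. -/
def rowConcat (u : ℕ) {K F S : ℕ} (A : Fin F → Fin K → Option (Fin S)) :
    Fin F → Fin (u * K) → Option (Fin S) :=
  fun j k =>
    A j ⟨k.val % K, Nat.mod_lt _ (Nat.pos_of_ne_zero (fun h => absurd k.isLt (by subst h; simp)))⟩

open Finset

/-!
A PDA is an EPDA with `L = 1`: by the cross-star condition, a row through `s` has a star in
every other column containing `s`. Concatenating `u` copies of an EPDA side by side keeps
every column property, and multiplies by `u` the number of columns a row sees in the subarray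
of `s`, since a column of the concatenation is a copy of column `k mod K`.
-/

theorem Fin.card_filter_modNat (m n : ℕ) (p : Fin n → Prop) [DecidablePred p] :
    #{k : Fin (m * n) | p k.modNat} = m * #{c | p c} :=
  calc #{k : Fin (m * n) | p k.modNat}
      = #(univ ×ˢ ({c | p c} : Finset (Fin n)) : Finset (Fin m × Fin n)) :=
        card_equiv finProdFinEquiv.symm (by simp [finProdFinEquiv_symm_apply])
    _ = m * #{c | p c} := by rw [card_product, card_univ, Fintype.card_fin]

section

variable {K F S : ℕ}

theorem rowConcat_apply (u : ℕ) (A : Fin F → Fin K → Option (Fin S)) (j : Fin F)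
    (k : Fin (u * K)) : rowConcat u A j k = A j k.modNat :=
  rfl

theorem IsPDA.isEPDA_one {Z : ℕ} {P : Fin F → Fin K → Option (Fin S)} (hP : IsPDA Z P) :
    IsEPDA 1 Z P := by
  obtain ⟨hstar, hsurj, hcross⟩ := hP
  refine ⟨hstar, hsurj, fun k j₁ j₂ s h₁ h₂ => ?_, fun s j ⟨c, hc⟩ => ?_⟩
  · by_contra hne
    exact (hcross j₁ j₂ k k s h₁ h₂ (by simp [hne])).2.1 rfl
  · have hsub : ({k | (∃ j', P j' k = some s) ∧ P j k ≠ none} : Finset (Fin K)) ⊆ {c} := by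
      intro k hk
      obtain ⟨⟨j', hj'⟩, hne⟩ := (mem_filter.mp hk).2
      by_contra hkc
      have hcell : (j', k) ≠ (j, c) := fun h => hkc (mem_singleton.mpr (congrArg Prod.snd h))
      exact hne (hcross j' j k c s hj' hc hcell).2.2.2
    simpa using card_le_card hsub

theorem IsEPDA.isEPDA_rowConcat {L Z : ℕ} {A : Fin F → Fin K → Option (Fin S)}
    (hA : IsEPDA L Z A) {u : ℕ} (hu : 0 < u) : IsEPDA (u * L) Z (rowConcat u A) := by
  obtain ⟨hstar, hsurj, hcol, hrow⟩ := hA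
  refine ⟨fun k => hstar k.modNat, fun s => ?_, fun k => hcol k.modNat,
    fun s j ⟨k, hk⟩ => ?_⟩
  · obtain ⟨j, c, hc⟩ := hsurj s
    refine ⟨j, finProdFinEquiv (⟨0, hu⟩, c), ?_⟩
    simpa [rowConcat_apply, Fin.modNat, Nat.mod_eq_of_lt c.2] using hc
  · calc #{k : Fin (u * K) | (∃ j', rowConcat u A j' k = some s) ∧ rowConcat u A j k ≠ none}
        = u * #{c | (∃ j', A j' c = some s) ∧ A j c ≠ none} :=
          Fin.card_filter_modNat u K fun c => (∃ j', A j' c = some s) ∧ A j c ≠ none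
      _ ≤ u * L := Nat.mul_le_mul_left u (hrow s j ⟨k.modNat, hk⟩)

end

/-- The `u`-row concatenation of a `(K,F,Z,S)` PDA is a
`(uK, u, F, Z, S)` EPDA. -/
theorem stmt6 {K F Z S : ℕ} (u : ℕ) (hu : 0 < u)
    (P : Fin F → Fin K → Option (Fin S)) (hP : IsPDA Z P) :
    IsEPDA u Z (rowConcat u P) := by
  simpa only [mul_one] using hP.isEPDA_one.isEPDA_rowConcat hu
end

section
/- Define the K×K array A by a_{j,k} = ★ iff (j - k) mod K < Z, and for each s ∈ [K-Z], a_{j,k} = s iff j ≡ Z + s + k - 1 (mod K). Then A is a well-defined K-regular (K, K-Z, K, Z, K-Z) EPDA. -/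
open scoped Classical

/-- Construction I: the `K × K` array (with rows and columns indexed from `0`,
corresponding to the 1-indexed description in the paper) in which the cell
`(j,k)` is a star iff `(j - k) mod K < Z`, and otherwise carries the integer
`s` (1-indexed; here `s.val = s - 1`) with `j ≡ Z + s + k - 1 (mod K)`,
i.e. `(j - k) mod K = Z + s.val`. -/
def constructionI (K Z : ℕ) : Fin K → Fin K → Option (Fin (K - Z)) :=
  fun j k =>
    if _h : (j.val + K - k.val) % K < Z then none
    else
      some ⟨(j.val + K - k.val) % K - Z, by
        have hK : 0 < K := lt_of_le_of_lt (Nat.zero_le _) j.isLt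
        have := Nat.mod_lt (j.val + K - k.val) hK
        omega⟩


section Aux
variable {K Z : ℕ}

lemma cI_sub_val (j k : Fin K) : (j.val + K - k.val) % K = (j - k).val := by
  rw [Fin.sub_def]; congr 1; have := k.isLt; omega

lemma cI_card_lt (hZK : Z ≤ K) :
    (Finset.univ.filter (fun d : Fin K => d.val < Z)).card = Z := by
  rw [← Finset.card_range Z]
  apply Finset.card_nbij (i := Fin.val)
  · intro a ha; simp at ha ⊢; exact ha
  · intro a _ b _ h; exact Fin.ext h
  · intro a ha; simp at ha ⊢
    exact ⟨⟨a, lt_of_lt_of_le ha hZK⟩, ha, rfl⟩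

lemma cI_card_not_lt (hZK : Z ≤ K) :
    (Finset.univ.filter (fun d : Fin K => ¬ d.val < Z)).card = K - Z := by
  have hsum := Finset.card_filter_add_card_filter_not
    (s := (Finset.univ : Finset (Fin K))) (p := fun d : Fin K => d.val < Z)
  have hlt := cI_card_lt (K := K) (Z := Z) hZK
  simp only [Finset.card_univ, Fintype.card_fin] at hsum
  omega

lemma cI_none_iff (j k : Fin K) :
    constructionI K Z j k = none ↔ (j.val + K - k.val) % K < Z := by
  unfold constructionI
  split <;> simp_all

lemma cI_some_iff (j k : Fin K) (s : Fin (K - Z)) :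
    constructionI K Z j k = some s ↔ (j.val + K - k.val) % K = Z + s.val := by
  unfold constructionI
  split
  next h =>
    exact iff_of_false (by simp) (by omega)
  next h =>
    simp only [Option.some.injEq, Fin.ext_iff]
    omega

lemma cI_sub_inj [NeZero K] {a b k : Fin K} (h : a - k = b - k) : a = b := by
  have := congrArg (· + k) h
  simpa using this

lemma cI_card_shift_lt [NeZero K] (k : Fin K) :
    (Finset.univ.filter (fun j : Fin K => (j - k).val < Z)).card
      = (Finset.univ.filter (fun d : Fin K => d.val < Z)).card := by
  apply Finset.card_nbij (i := fun j => j - k)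
  · intro a ha; simp at ha ⊢; exact ha
  · intro a _ b _ h; exact cI_sub_inj h
  · intro d hd
    simp at hd ⊢
    exact ⟨d + k, by simpa using hd⟩

lemma cI_card_shift_not_lt [NeZero K] (j : Fin K) :
    (Finset.univ.filter (fun k : Fin K => ¬ (j - k).val < Z)).card
      = (Finset.univ.filter (fun d : Fin K => ¬ d.val < Z)).card := by
  apply Finset.card_nbij (i := fun k => j - k)
  · intro a ha; simp at ha ⊢; exact ha
  · intro a _ b _ h
    have := congrArg (fun x => j - x) h
    simpa using this
  · intro d hd
    simp at hd ⊢
    exact ⟨j - d, by simpa using hd⟩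

end Aux

/-- The Construction I array (star at `(j,k)` iff `(j-k) mod K < Z`,
and integer `s ∈ [K-Z]` at `(j,k)` iff `j ≡ Z + s + k - 1 (mod K)`) is a
well-defined `K`-regular `(K, K-Z, K, Z, K-Z)` EPDA. -/
theorem stmt7 (K Z : ℕ) (hZ : 0 < Z) (hZK : Z < K) :
    (∀ j k : Fin K, constructionI K Z j k = none ↔ (j.val + K - k.val) % K < Z) ∧
    (∀ (j k : Fin K) (s : Fin (K - Z)),
      constructionI K Z j k = some s ↔ (j.val + K - k.val) % K = Z + s.val) ∧
    IsEPDA (K - Z) Z (constructionI K Z) ∧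
    IsRegularEPDA K (constructionI K Z) := by
  haveI : NeZero K := ⟨by omega⟩
  have hKZ : Z ≤ K := le_of_lt hZK
  refine ⟨cI_none_iff, cI_some_iff, ⟨?_, ?_, ?_, ?_⟩, ?_⟩
  · -- C1
    intro k
    have h1 : (Finset.univ.filter (fun j => constructionI K Z j k = none))
        = Finset.univ.filter (fun j : Fin K => (j - k).val < Z) := by
      apply Finset.filter_congr
      intro j _
      rw [cI_none_iff, cI_sub_val]
    rw [h1]
    exact (cI_card_shift_lt k).trans (cI_card_lt hKZ)
  · -- C2
    intro s
    have hs := s.isLt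
    refine ⟨⟨(Z + s.val) % K, Nat.mod_lt _ (by omega)⟩, ⟨0, by omega⟩, ?_⟩
    rw [cI_some_iff]
    show ((Z + s.val) % K + K - 0) % K = Z + s.val
    rw [Nat.sub_zero, Nat.mod_eq_of_lt (by omega : Z + s.val < K),
      Nat.add_mod_right, Nat.mod_eq_of_lt (by omega : Z + s.val < K)]
  · -- C3
    intro k j₁ j₂ s h₁ h₂
    rw [cI_some_iff, cI_sub_val] at h₁ h₂
    exact cI_sub_inj (Fin.ext (h₁.trans h₂.symm))
  · -- C4
    intro s j _
    have hs := s.isLt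
    have hcol : ∀ k : Fin K, ∃ j', constructionI K Z j' k = some s := by
      intro k
      refine ⟨⟨Z + s.val, by omega⟩ + k, ?_⟩
      rw [cI_some_iff, cI_sub_val, add_sub_cancel_right]
    have h1 : (Finset.univ.filter
        (fun k : Fin K => (∃ j', constructionI K Z j' k = some s) ∧
          constructionI K Z j k ≠ none))
        = Finset.univ.filter (fun k : Fin K => ¬ (j - k).val < Z) := by
      apply Finset.filter_congr
      intro k _
      simp only [hcol k, true_and, ne_eq, cI_none_iff, cI_sub_val]
    rw [h1]
    exact le_of_eq ((cI_card_shift_not_lt j).trans (cI_card_not_lt hKZ))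
  · -- regularity
    intro s
    have hs := s.isLt
    have h1 : (Finset.univ.filter
        (fun p : Fin K × Fin K => constructionI K Z p.1 p.2 = some s)).card
        = (Finset.univ : Finset (Fin K)).card := by
      apply Finset.card_nbij (i := fun p => p.2)
      · intro a _; simp
      · intro a ha b hb h
        simp only [Finset.mem_coe, Finset.mem_filter, cI_some_iff, cI_sub_val] at ha hb
        have h2 : a.1 - a.2 = b.1 - b.2 := Fin.ext (ha.2.trans hb.2.symm)
        simp only at h
        have h3 : a.1 = b.1 := by
          have := congrArg (· + a.2) h2
          simp only [sub_add_cancel] at this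
          rw [h] at this
          simpa [sub_add_cancel] using this
        exact Prod.ext h3 h
      · intro k _
        simp only [Set.mem_image, Finset.mem_coe, Finset.mem_filter]
        refine ⟨(⟨Z + s.val, by omega⟩ + k, k), ⟨Finset.mem_univ _, ?_⟩, rfl⟩
        rw [cI_some_iff, cI_sub_val, add_sub_cancel_right]
    rw [h1]
    simp
end

section
/- For a (K,L,M,N) multi-antenna coded caching system with t = KM/N an integer and L = K - t, a scheme achieving delivery time T = (K-t)/(t+L) = L/K exists with subpacketization number K/gcd(K,t,L), obtained from the EPDA framework: specifically, setting γ = gcd(K,t,L), K̃ = K/γ, t̃ = t/γ, L̃ = L/γ, the γ-row concatenation of the Construction I (K̃, K̃-t̃, K̃, t̃, K̃-t̃) EPDA is a (K, L, K̃, t̃, L̃) EPDA. -/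
open scoped Classical

section Aux
open Finset
lemma card_filter_equiv {α β : Type*} [Fintype α] [Fintype β] (e : α ≃ β)
    (p : β → Prop) [DecidablePred p] :
    (univ.filter fun a => p (e a)).card = (univ.filter p).card := by
  apply Finset.card_nbij (i := e)
  · intro a ha; simp_all
  · exact e.injective.injOn
  · intro b hb; exact ⟨e.symm b, by simp_all⟩

lemma card_lt_base {K' Z : ℕ} (hZ : Z ≤ K') :
    (univ.filter fun x : Fin K' => x.val < Z).card = Z := by
  have h : (univ.filter fun x : Fin K' => x.val < Z).card = (Finset.range Z).card := by
    apply Finset.card_nbij (i := Fin.val)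
    · intro a ha; simp_all
    · exact Fin.val_injective.injOn
    · intro b hb
      simp only [coe_range, Set.mem_Iio] at hb
      exact ⟨⟨b, lt_of_lt_of_le hb hZ⟩, by simp [hb]⟩
  simpa using h

lemma count_lt {K' Z : ℕ} [NeZero K'] (hZ : Z ≤ K') (c : Fin K') :
    (univ.filter fun j : Fin K' => (j - c).val < Z).card = Z := by
  have h1 := card_filter_equiv (Equiv.subRight c) (fun x : Fin K' => x.val < Z)
  simp only [Equiv.subRight_apply] at h1
  rw [h1, card_lt_base hZ]

lemma count_not_lt {K' Z : ℕ} [NeZero K'] (hZ : Z ≤ K') (c : Fin K') :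
    (univ.filter fun j : Fin K' => ¬ (j - c).val < Z).card = K' - Z := by
  rw [Finset.filter_not, Finset.card_sdiff_of_subset (Finset.filter_subset _ _), count_lt hZ,
    Finset.card_univ, Fintype.card_fin]

lemma card_concat (γ : ℕ) {K' : ℕ} (p : Fin K' → Prop) [DecidablePred p]
    (f : Fin (γ * K') → Fin K') (hf : ∀ k, (f k).val = k.val % K') :
    (univ.filter fun k => p (f k)).card = γ * (univ.filter p).card := by
  have h1 := card_filter_equiv (finProdFinEquiv (m := γ) (n := K')) (fun k => p (f k))
  have h2 : ∀ x : Fin γ × Fin K', f (finProdFinEquiv x) = x.2 := by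
    intro x
    have : (f (finProdFinEquiv x)).val = x.2.val := by
      rw [hf]
      show (x.2.val + K' * x.1.val) % K' = x.2.val
      rw [Nat.add_mul_mod_self_left, Nat.mod_eq_of_lt x.2.isLt]
    exact Fin.ext this
  simp only [h2] at h1
  rw [← h1]
  have h3 : (univ.filter fun x : Fin γ × Fin K' => p x.2) = univ ×ˢ (univ.filter p) := by
    ext x; simp
  rw [h3, Finset.card_product, Finset.card_univ, Fintype.card_fin]

lemma cI_none {K' Z : ℕ} [NeZero K'] (j k : Fin K') :
    constructionI K' Z j k = none ↔ (j - k).val < Z := by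
  have hnum : (j.val + K' - k.val) % K' = (j - k).val := by
    rw [Fin.sub_def]
    congr 1
    omega
  unfold constructionI
  split <;> rename_i h <;> simp <;> omega

lemma cI_some {K' Z : ℕ} [NeZero K'] (j k : Fin K') (s : Fin (K' - Z)) :
    constructionI K' Z j k = some s ↔ (j - k).val = Z + s.val := by
  have hnum : (j.val + K' - k.val) % K' = (j - k).val := by
    rw [Fin.sub_def]
    congr 1
    omega
  have hlt : (j - k).val < K' := (j - k).isLt
  have hs : s.val < K' - Z := s.isLt
  unfold constructionI
  split <;> rename_i h
  · simp; omega
  · simp only [Option.some_inj, Fin.ext_iff]; omega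

lemma count_not_lt_left {K' Z : ℕ} [NeZero K'] (hZ : Z ≤ K') (c : Fin K') :
    (univ.filter fun x : Fin K' => ¬ (c - x).val < Z).card = K' - Z := by
  have h1 := card_filter_equiv (Equiv.subLeft c) (fun x : Fin K' => ¬ x.val < Z)
  simp only [Equiv.subLeft_apply] at h1
  rw [h1, Finset.filter_not, Finset.card_sdiff_of_subset (Finset.filter_subset _ _),
    card_lt_base hZ, Finset.card_univ, Fintype.card_fin]

lemma epda_main (γ K' Z L : ℕ) (hγ0 : 0 < γ) (hK'0 : 0 < K') (hZK : Z < K')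
    (hLeq : L = γ * (K' - Z)) :
    IsEPDA L Z (rowConcat γ (constructionI K' Z)) := by
  haveI : NeZero K' := ⟨hK'0.ne'⟩
  have hpos : 0 < γ * K' := Nat.mul_pos hγ0 hK'0
  set km : Fin (γ * K') → Fin K' := fun k => ⟨k.val % K', Nat.mod_lt _ hK'0⟩ with hkm
  have hB : ∀ j k, rowConcat γ (constructionI K' Z) j k = constructionI K' Z j (km k) :=
    fun _ _ => rfl
  refine ⟨?_, ?_, ?_, ?_⟩
  · intro k
    simp only [hB, cI_none]
    exact count_lt (le_of_lt hZK) (km k)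
  · intro s
    have hs : Z + s.val < K' := by have := s.isLt; omega
    refine ⟨⟨Z + s.val, hs⟩, ⟨0, hpos⟩, ?_⟩
    rw [hB, cI_some]
    have h0 : km ⟨0, hpos⟩ = 0 := by
      apply Fin.ext
      simp [hkm, Nat.zero_mod]
    rw [h0, sub_zero]
  · intro k j₁ j₂ s h1 h2
    rw [hB, cI_some] at h1 h2
    have heq : j₁ - km k = j₂ - km k := Fin.ext (h1.trans h2.symm)
    have := congrArg (· + km k) heq
    simpa using this
  · intro s j _
    have hiff : ∀ k : Fin (γ * K'),
        ((∃ j', rowConcat γ (constructionI K' Z) j' k = some s) ∧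
          rowConcat γ (constructionI K' Z) j k ≠ none)
        ↔ ¬ (j - km k).val < Z := by
      intro k
      constructor
      · rintro ⟨-, h2⟩
        intro hlt
        exact h2 ((hB j k).trans ((cI_none j (km k)).mpr hlt))
      · intro h
        have hs : Z + s.val < K' := by have := s.isLt; omega
        refine ⟨⟨(⟨Z + s.val, hs⟩ : Fin K') + km k, ?_⟩, ?_⟩
        · rw [hB, cI_some, add_sub_cancel_right]
        · rw [hB, Ne, cI_none]
          exact h
    rw [Finset.filter_congr (fun k _ => hiff k),
      card_concat γ (fun x : Fin K' => ¬ (j - x).val < Z) km (fun k => rfl),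
      count_not_lt_left (le_of_lt hZK)]
    omega

end Aux

/-- For a `(K,L,M,N)` multi-antenna coded caching system with
`t = KM/N` an integer and `L = K - t`, setting `γ = gcd(K,t,L)`,
`K̃ = K/γ`, `t̃ = t/γ`, `L̃ = L/γ`, the `γ`-row concatenation of the
Construction I `(K̃, K̃-t̃, K̃, t̃, K̃-t̃)` EPDA is a `(K, L, K̃, t̃, L̃)` EPDA
(the column count `γ·K̃` equals `K` and the number of integers `K̃-t̃` equals `L̃`),
yielding a scheme with subpacketization `K/γ` and delivery time
`T = L̃/K̃ = (K-t)/(t+L) = L/K`. -/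
theorem stmt11 (K L M N t γ : ℕ) (hN : 0 < N) (hM : 0 < M)
    (ht0 : 0 < t) (htK : t < K)
    (ht : t * N = K * M) (hL : L = K - t)
    (hγ : γ = Nat.gcd K (Nat.gcd t L)) :
    γ * (K / γ) = K ∧
    K / γ - t / γ = L / γ ∧
    IsEPDA L (t / γ) (rowConcat γ (constructionI (K / γ) (t / γ))) ∧
    ((L : ℚ) / γ) / ((K : ℚ) / γ) = ((K : ℚ) - t) / ((t : ℚ) + L) ∧
    ((K : ℚ) - t) / ((t : ℚ) + L) = (L : ℚ) / K := by
  have hK0 : 0 < K := ht0.trans htK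
  have hγ0 : 0 < γ := hγ ▸ Nat.gcd_pos_of_pos_left _ hK0
  have hdK : γ ∣ K := hγ ▸ Nat.gcd_dvd_left _ _
  have hdt : γ ∣ t := hγ ▸ (Nat.gcd_dvd_right K (Nat.gcd t L)).trans (Nat.gcd_dvd_left t L)
  obtain ⟨K', hK'⟩ := hdK
  obtain ⟨Z, hZ⟩ := hdt
  have hKdiv : K / γ = K' := by rw [hK', Nat.mul_div_cancel_left _ hγ0]
  have htdiv : t / γ = Z := by rw [hZ, Nat.mul_div_cancel_left _ hγ0]
  have hK'0 : 0 < K' := Nat.pos_of_ne_zero (fun h => by simp [h] at hK'; omega)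
  have hZK : Z < K' := by
    by_contra hcon
    push_neg at hcon
    have := Nat.mul_le_mul_left γ hcon
    rw [← hZ, ← hK'] at this
    omega
  have hLγ : L = γ * (K' - Z) := by
    rw [hL, hK', hZ, Nat.mul_sub]
  have hLdiv : L / γ = K' - Z := by rw [hLγ, Nat.mul_div_cancel_left _ hγ0]
  have hcast : (t : ℚ) + L = K := by
    have h1 : t + L = K := by omega
    exact_mod_cast h1
  have hKt : (K : ℚ) - t = L := by linarith
  have hγQ : (γ : ℚ) ≠ 0 := Nat.cast_ne_zero.mpr hγ0.ne'
  have hKQ : (K : ℚ) ≠ 0 := Nat.cast_ne_zero.mpr hK0.ne'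
  refine ⟨?_, ?_, ?_, ?_, ?_⟩
  · rw [hKdiv]; exact hK'.symm
  · rw [hKdiv, htdiv, hLdiv]
  · rw [hKdiv, htdiv]
    exact epda_main γ K' Z L hγ0 hK'0 hZK hLγ
  · rw [hcast, hKt]
    field_simp
  · rw [hcast, hKt]
end

section
/- Let n ≥ 2 and K ≥ (2n-1)Z with L = (K - nZ)/(n-1) a positive integer. Define the K×K array B by: b_{j,k} = ★ iff (j-k) mod K < Z; for s = pK + q with p ∈ [0:n-2] even and q ∈ [K]: b_{q, <(p/2)(Z+L)+q+i>_K} = s for all i ∈ [L] and b_{<(p/2)(Z+L)+Z+q>_K, <q-Z+i>_K} = s for all i ∈ [Z]; for p odd: b_{q, <((p-1)/2)(Z+L)+L+q+i>_K} = s for all i ∈ [Z] and b_{<((p+1)/2)(Z+L)+q>_K, <q-Z+i>_K} = s for all i ∈ [L]. Then B is a well-defined (Z+L)-regular (K, L, K, Z, (n-1)K) EPDA. -/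
open scoped Classical

/-- Construction II as a specification: `B` (a `K × K` array over
`{★} ∪ [(n-1)K]`, 0-indexed) satisfies Construction II iff its star positions
are exactly `{(j,k) : (j-k) mod K < Z}` and, writing each integer `s` (with
`s.val = (s-1)` for the 1-indexed `s = pK + q`, so `p = s.val / K` and
`q - 1 = s.val % K`), the cells carrying `s` are exactly those prescribed by
the construction:
for `p` even, row `q` at columns `<(p/2)(Z+L)+q+i>_K`, `i ∈ [L]`, and row
`<(p/2)(Z+L)+Z+q>_K` at columns `<q-Z+i>_K`, `i ∈ [Z]`;
for `p` odd, row `q` at columns `<((p-1)/2)(Z+L)+L+q+i>_K`, `i ∈ [Z]`, and row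
`<((p+1)/2)(Z+L)+q>_K` at columns `<q-Z+i>_K`, `i ∈ [L]`.
(All index arithmetic is carried out 0-indexed modulo `K`.) -/
def ConstructionII (K Z L n : ℕ) (B : Fin K → Fin K → Option (Fin ((n - 1) * K))) : Prop :=
  (∀ j k : Fin K, B j k = none ↔ (j.val + K - k.val) % K < Z) ∧
  (∀ (j k : Fin K) (s : Fin ((n - 1) * K)),
    B j k = some s ↔
      ((s.val / K) % 2 = 0 ∧
        ((j.val = s.val % K ∧
            ∃ i ∈ Finset.Icc 1 L,
              k.val = ((s.val / K / 2) * (Z + L) + s.val % K + i) % K) ∨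
         (j.val = ((s.val / K / 2) * (Z + L) + Z + s.val % K) % K ∧
            ∃ i ∈ Finset.Icc 1 Z,
              k.val = (s.val % K + K - Z + i) % K))) ∨
      ((s.val / K) % 2 = 1 ∧
        ((j.val = s.val % K ∧
            ∃ i ∈ Finset.Icc 1 Z,
              k.val = (((s.val / K - 1) / 2) * (Z + L) + L + s.val % K + i) % K) ∨
         (j.val = (((s.val / K + 1) / 2) * (Z + L) + s.val % K) % K ∧
            ∃ i ∈ Finset.Icc 1 L,
              k.val = (s.val % K + K - Z + i) % K))))



namespace Stmt12

/-- `aF Z L p` = start of the `p`-th type-A offset interval. -/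
def aF (Z L p : ℕ) : ℕ := (p+1)/2 * L + p/2 * Z
/-- `bF Z L p` = start of the `p`-th type-B offset interval (measured by `e = K-Z-d`). -/
def bF (Z L p : ℕ) : ℕ := (p+1)/2 * Z + p/2 * L

def pA (Z L d : ℕ) : ℕ := 2*((d-1)/(Z+L)) + (if (d-1)%(Z+L) < L then 0 else 1)
def pB (Z L e : ℕ) : ℕ := 2*(e/(Z+L)) + (if e%(Z+L) < Z then 0 else 1)

lemma aF_even (Z L t : ℕ) : aF Z L (2*t) = t*(Z+L) := by
  unfold aF; have h1 : (2*t+1)/2 = t := by omega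
  have h2 : 2*t/2 = t := by omega
  rw [h1, h2]; ring

lemma aF_odd (Z L t : ℕ) : aF Z L (2*t+1) = t*(Z+L) + L := by
  unfold aF; have h1 : (2*t+1+1)/2 = t+1 := by omega
  have h2 : (2*t+1)/2 = t := by omega
  rw [h1, h2]; ring

lemma bF_even (Z L t : ℕ) : bF Z L (2*t) = t*(Z+L) := by
  unfold bF; have h1 : (2*t+1)/2 = t := by omega
  have h2 : 2*t/2 = t := by omega
  rw [h1, h2]; ring

lemma bF_odd (Z L t : ℕ) : bF Z L (2*t+1) = t*(Z+L) + Z := by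
  unfold bF; have h1 : (2*t+1+1)/2 = t+1 := by omega
  have h2 : (2*t+1)/2 = t := by omega
  rw [h1, h2]; ring

lemma aF_succ_even (Z L p : ℕ) (hp : p % 2 = 0) : aF Z L (p+1) = aF Z L p + L := by
  obtain ⟨t, rfl⟩ : ∃ t, p = 2*t := ⟨p/2, by omega⟩
  rw [aF_even, aF_odd]

lemma aF_succ_odd (Z L p : ℕ) (hp : p % 2 = 1) : aF Z L (p+1) = aF Z L p + Z := by
  obtain ⟨t, rfl⟩ : ∃ t, p = 2*t+1 := ⟨p/2, by omega⟩
  have : 2*t+1+1 = 2*(t+1) := by ring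
  rw [this, aF_even, aF_odd]; ring

lemma bF_succ_even (Z L p : ℕ) (hp : p % 2 = 0) : bF Z L (p+1) = bF Z L p + Z := by
  obtain ⟨t, rfl⟩ : ∃ t, p = 2*t := ⟨p/2, by omega⟩
  rw [bF_even, bF_odd]

lemma bF_succ_odd (Z L p : ℕ) (hp : p % 2 = 1) : bF Z L (p+1) = bF Z L p + L := by
  obtain ⟨t, rfl⟩ : ∃ t, p = 2*t+1 := ⟨p/2, by omega⟩
  have : 2*t+1+1 = 2*(t+1) := by ring
  rw [this, bF_even, bF_odd]; ring

lemma aF_succ (Z L p : ℕ) : aF Z L (p+1) = aF Z L p + (if p % 2 = 0 then L else Z) := by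
  rcases Nat.even_or_odd p with h | h
  · rw [aF_succ_even Z L p (Nat.even_iff.mp h)]; simp [Nat.even_iff.mp h]
  · rw [aF_succ_odd Z L p (Nat.odd_iff.mp h)]; simp [Nat.odd_iff.mp h]

lemma bF_succ (Z L p : ℕ) : bF Z L (p+1) = bF Z L p + (if p % 2 = 0 then Z else L) := by
  rcases Nat.even_or_odd p with h | h
  · rw [bF_succ_even Z L p (Nat.even_iff.mp h)]; simp [Nat.even_iff.mp h]
  · rw [bF_succ_odd Z L p (Nat.odd_iff.mp h)]; simp [Nat.odd_iff.mp h]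

lemma aF_add_bF (Z L p : ℕ) : aF Z L p + bF Z L p = p * (Z+L) := by
  unfold aF bF
  have h : (p+1)/2 + p/2 = p := by omega
  calc (p+1)/2 * L + p/2 * Z + ((p+1)/2 * Z + p/2 * L)
      = ((p+1)/2 + p/2) * (Z+L) := by ring
    _ = p * (Z+L) := by rw [h]

lemma aF_mono (Z L : ℕ) (hZ : 0 < Z) (hL : 0 < L) {p q : ℕ} (h : p ≤ q) :
    aF Z L p ≤ aF Z L q := by
  induction q with
  | zero => have : p = 0 := by omega
            subst this; rfl
  | succ q ih =>
    rcases Nat.lt_or_ge p (q+1) with h' | h'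
    · have := ih (by omega)
      rw [aF_succ]; split <;> omega
    · have : p = q+1 := by omega
      subst this; rfl

lemma aF_lt_mono (Z L : ℕ) (hZ : 0 < Z) (hL : 0 < L) {p q : ℕ} (h : p < q) :
    aF Z L p < aF Z L q := by
  have h1 : aF Z L (p+1) ≤ aF Z L q := aF_mono Z L hZ hL h
  rw [aF_succ] at h1; split at h1 <;> omega

lemma bF_mono (Z L : ℕ) (hZ : 0 < Z) (hL : 0 < L) {p q : ℕ} (h : p ≤ q) :
    bF Z L p ≤ bF Z L q := by
  induction q with
  | zero => have : p = 0 := by omega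
            subst this; rfl
  | succ q ih =>
    rcases Nat.lt_or_ge p (q+1) with h' | h'
    · have := ih (by omega)
      rw [bF_succ]; split <;> omega
    · have : p = q+1 := by omega
      subst this; rfl

lemma bF_lt_mono (Z L : ℕ) (hZ : 0 < Z) (hL : 0 < L) {p q : ℕ} (h : p < q) :
    bF Z L p < bF Z L q := by
  have h1 : bF Z L (p+1) ≤ bF Z L q := bF_mono Z L hZ hL h
  rw [bF_succ] at h1; split at h1 <;> omega

/-- Interval membership for `pA`. -/
lemma pA_mem (Z L : ℕ) (hZ : 0 < Z) (hL : 0 < L) (d : ℕ) (hd : 1 ≤ d) :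
    aF Z L (pA Z L d) < d ∧ d ≤ aF Z L (pA Z L d + 1) := by
  set t := (d-1)/(Z+L) with ht
  set r := (d-1)%(Z+L) with hr
  have hdm : (d-1) = (Z+L) * t + r := (Nat.div_add_mod (d-1) (Z+L)).symm
  have hrlt : r < Z+L := Nat.mod_lt _ (by omega)
  have hcomm : t*(Z+L) = (Z+L)*t := by ring
  have hcomm2 : (t+1)*(Z+L) = (Z+L)*t + (Z+L) := by ring
  unfold pA
  rw [← ht, ← hr]
  by_cases hc : r < L
  · simp only [hc, if_pos]
    have e1 : 2*t + 0 = 2*t := by ring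
    rw [e1, aF_even]
    have e2 : 2*t + 1 = 2*t + 1 := rfl
    rw [aF_odd]
    constructor <;> omega
  · simp only [hc, if_neg, not_false_iff]
    have e1 : 2*t + 1 = 2*t+1 := rfl
    rw [aF_odd]
    have e2 : 2*t+1+1 = 2*(t+1) := by ring
    rw [e2, aF_even]
    constructor
    · omega
    · omega

/-- Interval membership for `pB`. -/
lemma pB_mem (Z L : ℕ) (hZ : 0 < Z) (hL : 0 < L) (e : ℕ) :
    bF Z L (pB Z L e) ≤ e ∧ e < bF Z L (pB Z L e + 1) := by
  set t := e/(Z+L) with ht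
  set r := e%(Z+L) with hr
  have hdm : e = (Z+L) * t + r := (Nat.div_add_mod e (Z+L)).symm
  have hrlt : r < Z+L := Nat.mod_lt _ (by omega)
  have hcomm : t*(Z+L) = (Z+L)*t := by ring
  have hcomm2 : (t+1)*(Z+L) = (Z+L)*t + (Z+L) := by ring
  unfold pB
  rw [← ht, ← hr]
  by_cases hc : r < Z
  · simp only [hc, if_pos]
    have e1 : 2*t + 0 = 2*t := by ring
    rw [e1, bF_even, bF_odd]
    constructor <;> omega
  · simp only [hc, if_neg, not_false_iff]
    rw [bF_odd]
    have e2 : 2*t+1+1 = 2*(t+1) := by ring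
    rw [e2, bF_even]
    constructor
    · omega
    · omega

lemma pA_eq (Z L : ℕ) (hZ : 0 < Z) (hL : 0 < L) {p d : ℕ}
    (h1 : aF Z L p < d) (h2 : d ≤ aF Z L (p+1)) : pA Z L d = p := by
  have hd : 1 ≤ d := by omega
  obtain ⟨m1, m2⟩ := pA_mem Z L hZ hL d hd
  by_contra hne
  rcases Nat.lt_or_ge (pA Z L d) p with h | h
  · have : aF Z L (pA Z L d + 1) ≤ aF Z L p := aF_mono Z L hZ hL (by omega)
    omega
  · have hp : p < pA Z L d := by omega
    have : aF Z L (p+1) ≤ aF Z L (pA Z L d) := aF_mono Z L hZ hL (by omega)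
    omega

lemma pB_eq (Z L : ℕ) (hZ : 0 < Z) (hL : 0 < L) {p e : ℕ}
    (h1 : bF Z L p ≤ e) (h2 : e < bF Z L (p+1)) : pB Z L e = p := by
  obtain ⟨m1, m2⟩ := pB_mem Z L hZ hL e
  by_contra hne
  rcases Nat.lt_or_ge (pB Z L e) p with h | h
  · have : bF Z L (pB Z L e + 1) ≤ bF Z L p := bF_mono Z L hZ hL (by omega)
    omega
  · have hp : p < pB Z L e := by omega
    have : bF Z L (p+1) ≤ bF Z L (pB Z L e) := bF_mono Z L hZ hL (by omega)
    omega

end Stmt12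

namespace Stmt12

variable {K : ℕ}

/-- compute `A % K` from an explicit decomposition. -/
lemma mod_char (hK : 0 < K) (A v : ℕ) (hv : v < K) (h : ∃ c, A = c*K + v) : A % K = v := by
  obtain ⟨c, rfl⟩ := h
  rw [Nat.mul_comm, Nat.mul_add_mod, Nat.mod_eq_of_lt hv]

/-- offset extraction: `((q + c) % K + K - q) % K = c` for `q, c < K`. -/
lemma off (hK : 0 < K) {q c : ℕ} (hq : q < K) (hc : c < K) :
    ((q + c) % K + K - q) % K = c := by
  rcases Nat.lt_or_ge (q + c) K with h | h
  · rw [Nat.mod_eq_of_lt h]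
    exact mod_char hK _ _ hc ⟨1, by omega⟩
  · rw [mod_char hK (q+c) (q+c-K) (by omega) ⟨1, by omega⟩]
    exact mod_char hK _ _ hc ⟨0, by omega⟩

/-- general version: `((q + u) % K + K - q) % K = u % K`. -/
lemma offm (hK : 0 < K) {q : ℕ} (u : ℕ) (hq : q < K) :
    ((q + u) % K + K - q) % K = u % K := by
  have h1 : (q + u) % K = (q + u % K) % K := by
    rw [Nat.add_mod, Nat.mod_eq_of_lt hq]
  rw [h1]
  exact off hK hq (Nat.mod_lt _ hK)

/-- recover the column from its offset. -/
lemma off_inv (hK : 0 < K) {q k c : ℕ} (hq : q < K) (hk : k < K)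
    (h : (k + K - q) % K = c) : k = (q + c) % K := by
  rcases Nat.lt_or_ge k q with h' | h'
  · rw [Nat.mod_eq_of_lt (by omega : k + K - q < K)] at h
    exact (mod_char hK _ _ hk ⟨1, by omega⟩).symm
  · rw [mod_char hK (k+K-q) (k-q) (by omega) ⟨1, by omega⟩] at h
    exact (mod_char hK _ _ hk ⟨0, by omega⟩).symm

/-- inverse shift: `((j + (K - w)) % K + w) % K = j` for `w ≤ K`, `j < K`. -/
lemma shift_inv (hK : 0 < K) {j w : ℕ} (hj : j < K) (hw : w ≤ K) :
    ((j + (K - w)) % K + w) % K = j := by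
  rw [Nat.mod_add_mod]
  exact mod_char hK _ _ hj ⟨1, by omega⟩

/-- cancel common left summand mod K. -/
lemma mod_add_cancel {x u v : ℕ} (h : (x + u) % K = (x + v) % K) : u % K = v % K :=
  Nat.ModEq.add_left_cancel' x h

/-- star characterization via the forward offset `d = (k + K - j) % K`. -/
lemma star_iff (hK : 0 < K) {Z j k : ℕ} (hZ : 0 < Z) (hj : j < K) (hk : k < K) :
    (j + K - k) % K < Z ↔ ((k + K - j) % K = 0 ∨ K - Z < (k + K - j) % K) := by
  rcases Nat.lt_trichotomy j k with h | h | h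
  · rw [Nat.mod_eq_of_lt (by omega : j + K - k < K),
      mod_char hK (k+K-j) (k-j) (by omega) ⟨1, by omega⟩]
    omega
  · subst h
    rw [mod_char hK (j+K-j) 0 hK ⟨1, by omega⟩]
    omega
  · rw [Nat.mod_eq_of_lt (by omega : k + K - j < K),
      mod_char hK (j+K-k) (j-k) (by omega) ⟨1, by omega⟩]
    omega

end Stmt12

namespace Stmt12

/-- the placement predicate of Construction II, on bare naturals. -/
def P (K Z L : ℕ) (s j k : ℕ) : Prop :=
  ((s / K) % 2 = 0 ∧
    ((j = s % K ∧ ∃ i ∈ Finset.Icc 1 L, k = ((s / K / 2) * (Z + L) + s % K + i) % K) ∨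
     (j = ((s / K / 2) * (Z + L) + Z + s % K) % K ∧
        ∃ i ∈ Finset.Icc 1 Z, k = (s % K + K - Z + i) % K))) ∨
  ((s / K) % 2 = 1 ∧
    ((j = s % K ∧ ∃ i ∈ Finset.Icc 1 Z, k = (((s / K - 1) / 2) * (Z + L) + L + s % K + i) % K) ∨
     (j = (((s / K + 1) / 2) * (Z + L) + s % K) % K ∧
        ∃ i ∈ Finset.Icc 1 L, k = (s % K + K - Z + i) % K)))

/-- the integer placed at cell `(j,k)` (valid on non-star cells). -/
def code (K Z L n j k : ℕ) : ℕ :=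
  if (k + K - j) % K ≤ aF Z L (n-1) then pA Z L ((k + K - j) % K) * K + j
  else pB Z L (K - Z - (k + K - j) % K) * K +
       (j + (K - (aF Z L (pB Z L (K - Z - (k + K - j) % K)) + Z))) % K

variable {K Z L n : ℕ}

lemma aF_div2_even {p : ℕ} (hp : p % 2 = 0) : p/2*(Z+L) = aF Z L p := by
  obtain ⟨t, rfl⟩ : ∃ t, p = 2*t := ⟨p/2, by omega⟩
  rw [aF_even]; congr 1; omega

lemma aF_div2_odd {p : ℕ} (hp : p % 2 = 1) : (p-1)/2*(Z+L) + L = aF Z L p := by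
  obtain ⟨t, rfl⟩ : ∃ t, p = 2*t+1 := ⟨p/2, by omega⟩
  rw [aF_odd]; congr 2; omega

lemma aF_div2_odd' {p : ℕ} (hp : p % 2 = 1) : (p+1)/2*(Z+L) = aF Z L p + Z := by
  obtain ⟨t, rfl⟩ : ∃ t, p = 2*t+1 := ⟨p/2, by omega⟩
  rw [aF_odd]
  have h : (2*t+1+1)/2 = t+1 := by omega
  rw [h]; ring

lemma aF_eq_bF_even {p : ℕ} (hp : p % 2 = 0) : aF Z L p = bF Z L p := by
  obtain ⟨t, rfl⟩ : ∃ t, p = 2*t := ⟨p/2, by omega⟩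
  rw [aF_even, bF_even]

lemma aF_bF_odd {p : ℕ} (hp : p % 2 = 1) : aF Z L p + Z = bF Z L p + L := by
  obtain ⟨t, rfl⟩ : ∃ t, p = 2*t+1 := ⟨p/2, by omega⟩
  rw [aF_odd, bF_odd]; ring

lemma key_facts (hn : 2 ≤ n) (hZ : 0 < Z) (hL : 0 < L) (hKZ : (2*n-1)*Z ≤ K)
    (hK : K = n*Z + (n-1)*L) :
    0 < K ∧ aF Z L (n-1) + bF Z L (n-1) + Z = K ∧ Z ≤ bF Z L (n-1) ∧ Z ≤ L := by
  obtain ⟨m, rfl⟩ : ∃ m, n = m+2 := ⟨n-2, by omega⟩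
  have e1 : m+2-1 = m+1 := by omega
  rw [e1] at hK ⊢
  have h1 : aF Z L (m+1) + bF Z L (m+1) = (m+1)*(Z+L) := aF_add_bF Z L (m+1)
  have h2 : (m+1)*(Z+L) = (m+1)*Z + (m+1)*L := by ring
  have h3 : (m+2)*Z = (m+1)*Z + Z := by ring
  have hbZ : Z ≤ bF Z L (m+1) := by
    have hb1 : bF Z L 1 = Z := by
      have := bF_odd Z L 0; simpa using this
    have := bF_mono Z L hZ hL (by omega : 1 ≤ m+1)
    omega
  have hZL : Z ≤ L := by
    have e2 : 2*(m+2)-1 = 2*m+3 := by omega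
    rw [e2] at hKZ
    have h4 : (2*m+3)*Z = (m+2)*Z + (m+1)*Z := by ring
    have h5 : (m+1)*Z ≤ (m+1)*L := by omega
    exact Nat.le_of_mul_le_mul_left h5 (by omega)
  refine ⟨by omega, by omega, hbZ, hZL⟩

/-- `aF Z L (n-1) + 2*Z ≤ K` -/
lemma aF_top_le (hn : 2 ≤ n) (hZ : 0 < Z) (hL : 0 < L) (hKZ : (2*n-1)*Z ≤ K)
    (hK : K = n*Z + (n-1)*L) : aF Z L (n-1) + 2*Z ≤ K := by
  obtain ⟨_, hkey, hbZ, _⟩ := key_facts hn hZ hL hKZ hK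
  omega

end Stmt12

namespace Stmt12

variable {K Z L n : ℕ}

lemma code_div_mod (hK0 : 0 < K) {p q : ℕ} (hq : q < K) :
    (p*K + q)/K = p ∧ (p*K + q) % K = q := by
  constructor
  · rw [Nat.mul_comm, Nat.mul_add_div hK0, Nat.div_eq_of_lt hq]; omega
  · exact mod_char hK0 _ _ hq ⟨p, rfl⟩

lemma code_lt (hK0 : 0 < K) {p q m : ℕ} (hp : p < m) (hq : q < K) :
    p*K + q < m*K := by
  have h1 : (p+1)*K ≤ m*K := Nat.mul_le_mul_right K (by omega)
  have h2 : (p+1)*K = p*K + K := by ring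
  omega

lemma code_spec_fwd (hn : 2 ≤ n) (hZ : 0 < Z) (hL : 0 < L) (hKZ : (2*n-1)*Z ≤ K)
    (hK : K = n*Z + (n-1)*L) {j k : ℕ} (hj : j < K) (hk : k < K)
    (hns : ¬ (j + K - k) % K < Z) :
    code K Z L n j k < (n-1)*K ∧ P K Z L (code K Z L n j k) j k := by
  obtain ⟨hK0, hkey, hbZ, hZL⟩ := key_facts hn hZ hL hKZ hK
  set d := (k + K - j) % K with hd
  have hdK : d < K := Nat.mod_lt _ hK0
  have hdrange : d ≠ 0 ∧ d ≤ K - Z := by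
    rw [star_iff hK0 hZ hj hk] at hns
    push_neg at hns
    exact ⟨hns.1, by omega⟩
  have hjk : k = (j + d) % K := off_inv hK0 hj hk rfl
  by_cases hcase : d ≤ aF Z L (n-1)
  · -- type A
    set p := pA Z L d with hpdef
    obtain ⟨hm1, hm2⟩ := pA_mem Z L hZ hL d (by omega)
    rw [← hpdef] at hm1 hm2
    have hple : p < n - 1 := by
      by_contra hcon
      have := aF_mono Z L hZ hL (by omega : n-1 ≤ p)
      omega
    have hcode : code K Z L n j k = p*K + j := by
      unfold code; rw [← hd, if_pos hcase]
    obtain ⟨hdiv, hmod⟩ := code_div_mod hK0 (p := p) hj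
    refine ⟨by rw [hcode]; exact code_lt hK0 (by omega) hj, ?_⟩
    rw [hcode]
    unfold P
    rw [hdiv, hmod]
    rcases Nat.even_or_odd p with hpar | hpar
    · have hp2 : p % 2 = 0 := Nat.even_iff.mp hpar
      have hstep : aF Z L (p+1) = aF Z L p + L := aF_succ_even Z L p hp2
      refine Or.inl ⟨hp2, Or.inl ⟨rfl, d - aF Z L p, Finset.mem_Icc.mpr ⟨by omega, by omega⟩, ?_⟩⟩
      rw [aF_div2_even hp2]
      have e : aF Z L p + j + (d - aF Z L p) = j + d := by omega
      rw [e]; exact hjk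
    · have hp2 : p % 2 = 1 := Nat.odd_iff.mp hpar
      have hstep : aF Z L (p+1) = aF Z L p + Z := aF_succ_odd Z L p hp2
      refine Or.inr ⟨hp2, Or.inl ⟨rfl, d - aF Z L p, Finset.mem_Icc.mpr ⟨by omega, by omega⟩, ?_⟩⟩
      have e : (p-1)/2*(Z+L) + L + j + (d - aF Z L p) = j + d := by
        have := aF_div2_odd (Z := Z) (L := L) hp2
        omega
      rw [e]; exact hjk
  · -- type B
    set e := K - Z - d with he
    have heb : e < bF Z L (n-1) := by omega
    set p := pB Z L e with hpdef
    obtain ⟨hm1, hm2⟩ := pB_mem Z L hZ hL e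
    rw [← hpdef] at hm1 hm2
    have hple : p < n - 1 := by
      by_contra hcon
      have := bF_mono Z L hZ hL (by omega : n-1 ≤ p)
      omega
    have haP : aF Z L p + bF Z L p ≤ aF Z L (n-1) + bF Z L (n-1) := by
      have h1 := aF_mono Z L hZ hL (by omega : p ≤ n-1)
      have h2 := bF_mono Z L hZ hL (by omega : p ≤ n-1)
      omega
    have haP' : aF Z L p ≤ aF Z L (n-1) := aF_mono Z L hZ hL (by omega)
    have hwK : aF Z L p + Z ≤ K - Z := by omega
    set q0 := (j + (K - (aF Z L p + Z))) % K with hq0def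
    have hq0 : q0 < K := Nat.mod_lt _ hK0
    have hcode : code K Z L n j k = p*K + q0 := by
      unfold code; rw [← hd, if_neg hcase, ← he, ← hpdef, ← hq0def]
    obtain ⟨hdiv, hmod⟩ := code_div_mod hK0 (p := p) hq0
    have hjq : (q0 + (aF Z L p + Z)) % K = j := by
      rw [hq0def]; exact shift_inv hK0 hj (by omega)
    have hjk2 : k = (q0 + (aF Z L p + Z) + d) % K := by
      rw [hjk, ← hjq, Nat.mod_add_mod]
    refine ⟨by rw [hcode]; exact code_lt hK0 (by omega) hq0, ?_⟩
    rw [hcode]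
    unfold P
    rw [hdiv, hmod]
    rcases Nat.even_or_odd p with hpar | hpar
    · have hp2 : p % 2 = 0 := Nat.even_iff.mp hpar
      have hstep : bF Z L (p+1) = bF Z L p + Z := bF_succ_even Z L p hp2
      have hab : aF Z L p = bF Z L p := aF_eq_bF_even hp2
      refine Or.inl ⟨hp2, Or.inr ⟨?_, bF Z L p + Z - e, Finset.mem_Icc.mpr ⟨by omega, by omega⟩, ?_⟩⟩
      · rw [aF_div2_even hp2]
        have e2 : aF Z L p + Z + q0 = q0 + (aF Z L p + Z) := by ring
        rw [e2, hjq]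
      · have e2 : q0 + (aF Z L p + Z) + d = q0 + K - Z + (bF Z L p + Z - e) := by omega
        rw [hjk2, e2]
    · have hp2 : p % 2 = 1 := Nat.odd_iff.mp hpar
      have hstep : bF Z L (p+1) = bF Z L p + L := bF_succ_odd Z L p hp2
      have hab : aF Z L p + Z = bF Z L p + L := aF_bF_odd hp2
      refine Or.inr ⟨hp2, Or.inr ⟨?_, bF Z L p + L - e, Finset.mem_Icc.mpr ⟨by omega, by omega⟩, ?_⟩⟩
      · rw [aF_div2_odd' hp2]
        have e2 : aF Z L p + Z + q0 = q0 + (aF Z L p + Z) := by ring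
        rw [e2, hjq]
      · have e2 : q0 + (aF Z L p + Z) + d = q0 + K - Z + (bF Z L p + L - e) := by omega
        rw [hjk2, e2]

end Stmt12

namespace Stmt12

variable {K Z L n : ℕ}

lemma bwd_A (hn : 2 ≤ n) (hZ : 0 < Z) (hL : 0 < L) (hKZ : (2*n-1)*Z ≤ K)
    (hK : K = n*Z + (n-1)*L) {p q0 c k : ℕ} (hple : p < n-1) (hq0 : q0 < K)
    (h1 : aF Z L p < c) (h2 : c ≤ aF Z L (p+1)) (hk' : k = (q0 + c) % K) :
    ¬ (q0 + K - k) % K < Z ∧ code K Z L n q0 k = p*K + q0 := by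
  obtain ⟨hK0, hkey, hbZ, hZL⟩ := key_facts hn hZ hL hKZ hK
  have haN : aF Z L (p+1) ≤ aF Z L (n-1) := aF_mono Z L hZ hL (by omega)
  have hc : c < K := by omega
  have hk2 : k < K := hk' ▸ Nat.mod_lt _ hK0
  have hd : (k + K - q0) % K = c := by rw [hk']; exact off hK0 hq0 hc
  constructor
  · rw [star_iff hK0 hZ hq0 hk2, hd]
    push_neg
    omega
  · unfold code
    rw [hd, if_pos (by omega), pA_eq Z L hZ hL h1 h2]

lemma bwd_B (hn : 2 ≤ n) (hZ : 0 < Z) (hL : 0 < L) (hKZ : (2*n-1)*Z ≤ K)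
    (hK : K = n*Z + (n-1)*L) {p q0 i j k : ℕ} (hple : p < n-1) (hq0 : q0 < K)
    (hi1 : 1 ≤ i) (hi2 : i ≤ aF Z L p + Z)
    (hb1 : bF Z L p + i ≤ aF Z L p + Z)
    (hb2 : aF Z L p + Z < bF Z L (p+1) + i)
    (hj' : j = (q0 + (aF Z L p + Z)) % K)
    (hk' : k = (q0 + K - Z + i) % K) :
    ¬ (j + K - k) % K < Z ∧ code K Z L n j k = p*K + q0 := by
  obtain ⟨hK0, hkey, hbZ, hZL⟩ := key_facts hn hZ hL hKZ hK
  have haN : aF Z L p ≤ aF Z L (n-1) := aF_mono Z L hZ hL (by omega)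
  have hbN : bF Z L (p+1) ≤ bF Z L (n-1) := bF_mono Z L hZ hL (by omega)
  set e := aF Z L p + Z - i with he
  set c := K - Z - e with hc
  have hwK : aF Z L p + 2*Z ≤ K := by omega
  have hcb : 1 ≤ c ∧ c ≤ K - Z ∧ c < K := by omega
  have hj2 : j < K := hj' ▸ Nat.mod_lt _ hK0
  have hk2 : k < K := hk' ▸ Nat.mod_lt _ hK0
  have hkj : k = (j + c) % K := by
    rw [hj', Nat.mod_add_mod, hk']
    congr 1
    omega
  have hd : (k + K - j) % K = c := by rw [hkj]; exact off hK0 hj2 hcb.2.2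
  constructor
  · rw [star_iff hK0 hZ hj2 hk2, hd]
    push_neg
    omega
  · unfold code
    rw [hd, if_neg (by omega)]
    have he2 : K - Z - c = e := by omega
    rw [he2, pB_eq Z L hZ hL (p := p) (e := e) (by omega) (by omega)]
    congr 1
    rw [hj', Nat.mod_add_mod]
    exact mod_char hK0 _ _ hq0 ⟨1, by omega⟩

lemma code_spec_bwd (hn : 2 ≤ n) (hZ : 0 < Z) (hL : 0 < L) (hKZ : (2*n-1)*Z ≤ K)
    (hK : K = n*Z + (n-1)*L) {j k s : ℕ} (hj : j < K) (hk : k < K)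
    (hs : s < (n-1)*K) (hP : P K Z L s j k) :
    ¬ (j + K - k) % K < Z ∧ code K Z L n j k = s := by
  obtain ⟨hK0, hkey, hbZ, hZL⟩ := key_facts hn hZ hL hKZ hK
  set p := s / K with hp
  set q0 := s % K with hq0def
  have hq0 : q0 < K := Nat.mod_lt _ hK0
  have hsp : p*K + q0 = s := by rw [Nat.mul_comm]; exact Nat.div_add_mod s K
  have hple : p < n-1 := (Nat.div_lt_iff_lt_mul hK0).mpr hs
  unfold P at hP
  rw [← hp, ← hq0def] at hP
  rcases hP with ⟨hp2, hP⟩ | ⟨hp2, hP⟩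
  · -- p even
    have hstep : aF Z L (p+1) = aF Z L p + L := aF_succ_even Z L p hp2
    have hab : aF Z L p = bF Z L p := aF_eq_bF_even hp2
    have hbstep : bF Z L (p+1) = bF Z L p + Z := bF_succ_even Z L p hp2
    rcases hP with ⟨hj', i, hi, hk'⟩ | ⟨hj', i, hi, hk'⟩
    · rw [Finset.mem_Icc] at hi
      have e2 : p/2*(Z+L) + q0 + i = q0 + (aF Z L p + i) := by
        rw [aF_div2_even hp2]; ring
      rw [e2] at hk'
      have := bwd_A hn hZ hL hKZ hK hple hq0 (by omega : aF Z L p < aF Z L p + i)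
        (by omega) hk'
      rw [hj']
      exact ⟨this.1, by rw [this.2, hsp]⟩
    · rw [Finset.mem_Icc] at hi
      have e2 : p/2*(Z+L) + Z + q0 = q0 + (aF Z L p + Z) := by
        rw [aF_div2_even hp2]; ring
      rw [e2] at hj'
      have := bwd_B hn hZ hL hKZ hK hple hq0 hi.1 (by omega) (by omega) (by omega)
        hj' hk'
      exact ⟨this.1, by rw [this.2, hsp]⟩
  · -- p odd
    have hstep : aF Z L (p+1) = aF Z L p + Z := aF_succ_odd Z L p hp2
    have hab : aF Z L p + Z = bF Z L p + L := aF_bF_odd hp2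
    have hbstep : bF Z L (p+1) = bF Z L p + L := bF_succ_odd Z L p hp2
    rcases hP with ⟨hj', i, hi, hk'⟩ | ⟨hj', i, hi, hk'⟩
    · rw [Finset.mem_Icc] at hi
      have e2 : (p-1)/2*(Z+L) + L + q0 + i = q0 + (aF Z L p + i) := by
        have := aF_div2_odd (Z := Z) (L := L) hp2
        omega
      rw [e2] at hk'
      have := bwd_A hn hZ hL hKZ hK hple hq0 (by omega : aF Z L p < aF Z L p + i)
        (by omega) hk'
      rw [hj']
      exact ⟨this.1, by rw [this.2, hsp]⟩
    · rw [Finset.mem_Icc] at hi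
      have e2 : (p+1)/2*(Z+L) + q0 = q0 + (aF Z L p + Z) := by
        have := aF_div2_odd' (Z := Z) (L := L) hp2
        omega
      rw [e2] at hj'
      have := bwd_B hn hZ hL hKZ hK hple hq0 hi.1 (by omega) (by omega) (by omega)
        hj' hk'
      exact ⟨this.1, by rw [this.2, hsp]⟩

end Stmt12

namespace Stmt12

variable {K Z L n : ℕ}

lemma csome {B : Fin K → Fin K → Option (Fin ((n-1)*K))} (hB : ConstructionII K Z L n B)
    (j k : Fin K) (s : Fin ((n-1)*K)) :
    B j k = some s ↔ P K Z L s.val j.val k.val := hB.2 j k s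

lemma csome' (hn : 2 ≤ n) (hZ : 0 < Z) (hL : 0 < L) (hKZ : (2*n-1)*Z ≤ K)
    (hK : K = n*Z + (n-1)*L) {B : Fin K → Fin K → Option (Fin ((n-1)*K))}
    (hB : ConstructionII K Z L n B) (j k : Fin K) (s : Fin ((n-1)*K)) :
    B j k = some s ↔
      (¬ (j.val + K - k.val) % K < Z ∧ s.val = code K Z L n j.val k.val) := by
  rw [csome hB j k s]
  constructor
  · intro h
    obtain ⟨h1, h2⟩ := code_spec_bwd hn hZ hL hKZ hK j.isLt k.isLt s.isLt h
    exact ⟨h1, h2.symm⟩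
  · rintro ⟨h1, h2⟩
    obtain ⟨_, hp⟩ := code_spec_fwd hn hZ hL hKZ hK j.isLt k.isLt h1
    rw [h2]
    exact hp

lemma exists_B (hn : 2 ≤ n) (hZ : 0 < Z) (hL : 0 < L) (hKZ : (2*n-1)*Z ≤ K)
    (hK : K = n*Z + (n-1)*L) :
    ∃ B : Fin K → Fin K → Option (Fin ((n-1)*K)), ConstructionII K Z L n B := by
  refine ⟨fun j k => if h : (j.val + K - k.val) % K < Z then none
    else some ⟨code K Z L n j.val k.val,
      (code_spec_fwd hn hZ hL hKZ hK j.isLt k.isLt h).1⟩, ?_, ?_⟩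
  · intro j k
    by_cases h : (j.val + K - k.val) % K < Z <;> simp [h]
  · intro j k s
    constructor
    · intro h
      dsimp only at h
      by_cases hstar : (j.val + K - k.val) % K < Z
      · rw [dif_pos hstar] at h
        exact absurd h (by simp)
      · rw [dif_neg hstar] at h
        have h2 : code K Z L n j.val k.val = s.val := by
          have := Option.some_injective _ h
          exact congrArg Fin.val this
        have hp := (code_spec_fwd hn hZ hL hKZ hK j.isLt k.isLt hstar).2
        rw [h2] at hp
        exact hp
    · intro h
      have hP : P K Z L s.val j.val k.val := h
      obtain ⟨h1, h2⟩ := code_spec_bwd hn hZ hL hKZ hK j.isLt k.isLt s.isLt hP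
      dsimp only
      rw [dif_neg h1]
      exact congrArg some (Fin.ext h2)

lemma C1 (hn : 2 ≤ n) (hZ : 0 < Z) (hL : 0 < L) (hKZ : (2*n-1)*Z ≤ K)
    (hK : K = n*Z + (n-1)*L) {B : Fin K → Fin K → Option (Fin ((n-1)*K))}
    (hB : ConstructionII K Z L n B) (k : Fin K) :
    (Finset.univ.filter (fun j => B j k = none)).card = Z := by
  obtain ⟨hK0, hkey, hbZ, hZL⟩ := key_facts hn hZ hL hKZ hK
  have hZK : Z ≤ K := by omega
  rw [← Finset.card_range Z]
  apply Finset.card_bij' (fun j _ => (j.val + K - k.val) % K)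
    (fun r _ => (⟨(k.val + r) % K, Nat.mod_lt _ hK0⟩ : Fin K))
  · intro j hj
    rw [Finset.mem_filter] at hj
    rw [Finset.mem_range]
    exact (hB.1 j k).mp hj.2
  · intro r hr
    rw [Finset.mem_range] at hr
    rw [Finset.mem_filter]
    refine ⟨Finset.mem_univ _, (hB.1 _ k).mpr ?_⟩
    show ((k.val + r) % K + K - k.val) % K < Z
    rw [off hK0 k.isLt (by omega)]
    exact hr
  · intro j hj
    apply Fin.ext
    exact (off_inv hK0 k.isLt j.isLt rfl).symm
  · intro r hr
    rw [Finset.mem_range] at hr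
    exact off hK0 k.isLt (by omega)

lemma C2 (hn : 2 ≤ n) (hZ : 0 < Z) (hL : 0 < L) (hKZ : (2*n-1)*Z ≤ K)
    (hK : K = n*Z + (n-1)*L) {B : Fin K → Fin K → Option (Fin ((n-1)*K))}
    (hB : ConstructionII K Z L n B) (s : Fin ((n-1)*K)) :
    ∃ j k, B j k = some s := by
  obtain ⟨hK0, hkey, hbZ, hZL⟩ := key_facts hn hZ hL hKZ hK
  have hq0 : s.val % K < K := Nat.mod_lt _ hK0
  rcases Nat.even_or_odd (s.val / K) with hpar | hpar
  · refine ⟨⟨s.val % K, hq0⟩, ⟨(s.val / K / 2 * (Z+L) + s.val % K + 1) % K, Nat.mod_lt _ hK0⟩, ?_⟩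
    rw [csome hB]
    exact Or.inl ⟨Nat.even_iff.mp hpar,
      Or.inl ⟨rfl, 1, Finset.mem_Icc.mpr ⟨le_refl 1, hL⟩, rfl⟩⟩
  · refine ⟨⟨s.val % K, hq0⟩, ⟨((s.val / K - 1) / 2 * (Z+L) + L + s.val % K + 1) % K, Nat.mod_lt _ hK0⟩, ?_⟩
    rw [csome hB]
    exact Or.inr ⟨Nat.odd_iff.mp hpar,
      Or.inl ⟨rfl, 1, Finset.mem_Icc.mpr ⟨le_refl 1, hZ⟩, rfl⟩⟩

/-- mixed-branch contradiction for column injectivity. -/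
lemma mixed_absurd (hn : 2 ≤ n) (hZ : 0 < Z) (hL : 0 < L) (hKZ : (2*n-1)*Z ≤ K)
    (hK : K = n*Z + (n-1)*L) {j1 j2 k : ℕ} (hj1 : j1 < K) (hj2 : j2 < K) (hk : k < K)
    (hns1 : 1 ≤ (k + K - j1) % K ∧ (k + K - j1) % K ≤ K - Z)
    (hns2 : 1 ≤ (k + K - j2) % K ∧ (k + K - j2) % K ≤ K - Z)
    (hc1 : (k + K - j1) % K ≤ aF Z L (n-1))
    (hc2 : ¬ (k + K - j2) % K ≤ aF Z L (n-1))
    (hcode : code K Z L n j1 k = code K Z L n j2 k) : False := by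
  obtain ⟨hK0, hkey, hbZ, hZL⟩ := key_facts hn hZ hL hKZ hK
  set d1 := (k + K - j1) % K with hd1
  set d2 := (k + K - j2) % K with hd2
  have hd2K : d2 < K := Nat.mod_lt _ hK0
  set e2 := K - Z - d2 with he2
  have hcode1 : code K Z L n j1 k = pA Z L d1 * K + j1 := by
    unfold code; rw [← hd1, if_pos hc1]
  have hcode2 : code K Z L n j2 k = pB Z L e2 * K +
      (j2 + (K - (aF Z L (pB Z L e2) + Z))) % K := by
    unfold code; rw [← hd2, if_neg hc2, ← he2]
  set p1 := pA Z L d1 with hp1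
  set p2 := pB Z L e2 with hp2
  set q2 := (j2 + (K - (aF Z L p2 + Z))) % K with hq2
  have hq2K : q2 < K := Nat.mod_lt _ hK0
  obtain ⟨hA1, hA2⟩ := pA_mem Z L hZ hL d1 (by omega)
  rw [← hp1] at hA1 hA2
  obtain ⟨hB1, hB2⟩ := pB_mem Z L hZ hL e2
  rw [← hp2] at hB1 hB2
  have heb : e2 < bF Z L (n-1) := by omega
  have hp2le : p2 < n-1 := by
    by_contra hcon
    have := bF_mono Z L hZ hL (by omega : n-1 ≤ p2)
    omega
  have hpeq : p1 = p2 := by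
    have e1 := (code_div_mod hK0 (p := p1) hj1).1
    have e2' := (code_div_mod hK0 (p := p2) hq2K).1
    rw [hcode1, hcode2] at hcode
    rw [← e1, ← e2', hcode]
  have hjeq : j1 = q2 := by
    have e1 := (code_div_mod hK0 (p := p1) hj1).2
    have e2' := (code_div_mod hK0 (p := p2) hq2K).2
    rw [hcode1, hcode2] at hcode
    rw [← e1, ← e2', hcode]
  have haP : aF Z L p2 ≤ aF Z L (n-1) := aF_mono Z L hZ hL (by omega)
  have hwK : aF Z L p2 + Z ≤ K := by omega
  have hj2q : (q2 + (aF Z L p2 + Z)) % K = j2 := by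
    rw [hq2]; exact shift_inv hK0 hj2 hwK
  -- k = (j2 + d2) % K = (j1 + (w + d2)) % K, also k = (j1 + d1) % K
  have hk1 : k = (j1 + d1) % K := off_inv hK0 hj1 hk rfl
  have hk2' : k = (j2 + d2) % K := off_inv hK0 hj2 hk rfl
  have hk3 : k = (j1 + (aF Z L p2 + Z + d2)) % K := by
    rw [hk2', ← hj2q, hjeq, Nat.mod_add_mod, Nat.add_assoc]
  have hd1eq : d1 = (aF Z L p2 + Z + d2) % K := by
    have h1 : (k + K - j1) % K = d1 := hd1.symm
    rw [hk3] at h1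
    rw [← h1, offm hK0 _ hj1]
  rcases Nat.lt_or_ge (aF Z L p2) e2 with hce | hce
  · -- e2 > aF p2 : d1 = K - (e2 - aF p2) > aF (n-1), contradiction
    have : (aF Z L p2 + Z + d2) % K = K - (e2 - aF Z L p2) :=
      mod_char hK0 _ _ (by omega) ⟨0, by omega⟩
    omega
  · -- e2 ≤ aF p2 : d1 = aF p2 - e2 ≤ aF p2, contradiction with aF p1 < d1, p1 = p2
    have : (aF Z L p2 + Z + d2) % K = aF Z L p2 - e2 :=
      mod_char hK0 _ _ (by omega) ⟨1, by omega⟩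
    rw [hpeq] at hA1
    omega

lemma code_row_inj (hn : 2 ≤ n) (hZ : 0 < Z) (hL : 0 < L) (hKZ : (2*n-1)*Z ≤ K)
    (hK : K = n*Z + (n-1)*L) {j1 j2 k : ℕ} (hj1 : j1 < K) (hj2 : j2 < K) (hk : k < K)
    (h1 : ¬ (j1 + K - k) % K < Z) (h2 : ¬ (j2 + K - k) % K < Z)
    (hcode : code K Z L n j1 k = code K Z L n j2 k) : j1 = j2 := by
  obtain ⟨hK0, hkey, hbZ, hZL⟩ := key_facts hn hZ hL hKZ hK
  have hns1 : 1 ≤ (k + K - j1) % K ∧ (k + K - j1) % K ≤ K - Z := by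
    rw [star_iff hK0 hZ hj1 hk] at h1; push_neg at h1; omega
  have hns2 : 1 ≤ (k + K - j2) % K ∧ (k + K - j2) % K ≤ K - Z := by
    rw [star_iff hK0 hZ hj2 hk] at h2; push_neg at h2; omega
  by_cases hc1 : (k + K - j1) % K ≤ aF Z L (n-1) <;>
    by_cases hc2 : (k + K - j2) % K ≤ aF Z L (n-1)
  · -- both type A
    have hcode1 : code K Z L n j1 k = pA Z L ((k + K - j1) % K) * K + j1 := by
      unfold code; rw [if_pos hc1]
    have hcode2 : code K Z L n j2 k = pA Z L ((k + K - j2) % K) * K + j2 := by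
      unfold code; rw [if_pos hc2]
    have e1 := (code_div_mod hK0 (p := pA Z L ((k + K - j1) % K)) hj1).2
    have e2 := (code_div_mod hK0 (p := pA Z L ((k + K - j2) % K)) hj2).2
    rw [hcode1, hcode2] at hcode
    rw [← e1, ← e2, hcode]
  · exact absurd hcode (fun hc => mixed_absurd hn hZ hL hKZ hK hj1 hj2 hk hns1 hns2 hc1 hc2 hc)
  · exact absurd hcode (fun hc => (mixed_absurd hn hZ hL hKZ hK hj2 hj1 hk hns2 hns1 hc2 hc1 hc.symm))
  · -- both type B
    set e1 := K - Z - (k + K - j1) % K with he1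
    set e2 := K - Z - (k + K - j2) % K with he2
    have hcode1 : code K Z L n j1 k = pB Z L e1 * K +
        (j1 + (K - (aF Z L (pB Z L e1) + Z))) % K := by
      unfold code; rw [if_neg hc1, ← he1]
    have hcode2 : code K Z L n j2 k = pB Z L e2 * K +
        (j2 + (K - (aF Z L (pB Z L e2) + Z))) % K := by
      unfold code; rw [if_neg hc2, ← he2]
    set p1 := pB Z L e1 with hp1
    set p2 := pB Z L e2 with hp2
    set q1 := (j1 + (K - (aF Z L p1 + Z))) % K with hq1
    set q2 := (j2 + (K - (aF Z L p2 + Z))) % K with hq2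
    have hq1K : q1 < K := Nat.mod_lt _ hK0
    have hq2K : q2 < K := Nat.mod_lt _ hK0
    have hpeq : p1 = p2 := by
      have d1 := (code_div_mod hK0 (p := p1) hq1K).1
      have d2 := (code_div_mod hK0 (p := p2) hq2K).1
      rw [hcode1, hcode2] at hcode
      rw [← d1, ← d2, hcode]
    have hqeq : q1 = q2 := by
      have d1 := (code_div_mod hK0 (p := p1) hq1K).2
      have d2 := (code_div_mod hK0 (p := p2) hq2K).2
      rw [hcode1, hcode2] at hcode
      rw [← d1, ← d2, hcode]
    obtain ⟨hB1, hB1'⟩ := pB_mem Z L hZ hL e1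
    rw [← hp1] at hB1 hB1'
    have heb : e1 < bF Z L (n-1) := by omega
    have hp1le : p1 < n-1 := by
      by_contra hcon
      have := bF_mono Z L hZ hL (by omega : n-1 ≤ p1)
      omega
    have haP : aF Z L p1 ≤ aF Z L (n-1) := aF_mono Z L hZ hL (by omega)
    have hwK : aF Z L p1 + Z ≤ K := by omega
    have r1 : (q1 + (aF Z L p1 + Z)) % K = j1 := by
      rw [hq1]; exact shift_inv hK0 hj1 hwK
    have r2 : (q2 + (aF Z L p2 + Z)) % K = j2 := by
      rw [hq2]; exact shift_inv hK0 hj2 (by rw [← hpeq]; exact hwK)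
    rw [← r1, ← r2, hqeq, hpeq]

lemma C3 (hn : 2 ≤ n) (hZ : 0 < Z) (hL : 0 < L) (hKZ : (2*n-1)*Z ≤ K)
    (hK : K = n*Z + (n-1)*L) {B : Fin K → Fin K → Option (Fin ((n-1)*K))}
    (hB : ConstructionII K Z L n B) (k : Fin K) (j₁ j₂ : Fin K) (s : Fin ((n-1)*K))
    (h1 : B j₁ k = some s) (h2 : B j₂ k = some s) : j₁ = j₂ := by
  rw [csome' hn hZ hL hKZ hK hB] at h1 h2
  exact Fin.ext (code_row_inj hn hZ hL hKZ hK j₁.isLt j₂.isLt k.isLt h1.1 h2.1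
    (h1.2 ▸ h2.2 ▸ rfl))

end Stmt12

namespace Stmt12

variable {K Z L n : ℕ}

lemma mod_inj_window (hK0 : 0 < K) {t1 t2 : ℕ} (hlt : t1 < t2 + K) (hgt : t2 < t1 + K)
    (h : t1 % K = t2 % K) : t1 = t2 := by
  rcases Nat.lt_or_ge t2 t1 with hle | hle
  · have hdvd : K ∣ t1 - t2 := (Nat.modEq_iff_dvd' (by omega)).mp h.symm
    rcases Nat.eq_zero_or_pos (t1 - t2) with h0 | h0
    · omega
    · have := Nat.le_of_dvd h0 hdvd
      omega
  · have hdvd : K ∣ t2 - t1 := (Nat.modEq_iff_dvd' hle).mp h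
    rcases Nat.eq_zero_or_pos (t2 - t1) with h0 | h0
    · omega
    · have := Nat.le_of_dvd h0 hdvd
      omega

lemma off_shift (hK0 : 0 < K) {q0 w : ℕ} (hq0 : q0 < K) (hw : w ≤ K) (u : ℕ) :
    ((q0 + u) % K + K - (q0 + w) % K) % K = (u + (K - w)) % K := by
  have hrow : (q0 + w) % K < K := Nat.mod_lt _ hK0
  have h1 : (q0 + u) % K = ((q0 + w) % K + ((u + (K - w)) % K)) % K := by
    rw [Nat.mod_add_mod, Nat.add_mod_mod]
    have e : q0 + w + (u + (K - w)) = q0 + u + K := by omega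
    rw [e, Nat.add_mod_right]
  rw [h1, off hK0 hrow (Nat.mod_lt _ hK0)]

/-- the cells of the integer `s`, in normalized form. -/
lemma P_iff_cells (hn : 2 ≤ n) (hZ : 0 < Z) (hL : 0 < L) (hKZ : (2*n-1)*Z ≤ K)
    (hK : K = n*Z + (n-1)*L) {s : ℕ} (hs : s < (n-1)*K) (j k : ℕ) :
    P K Z L s j k ↔
      ((j = s % K ∧ ∃ i ∈ Finset.Icc 1 (aF Z L (s/K+1) - aF Z L (s/K)),
          k = (s % K + (aF Z L (s/K) + i)) % K) ∨
       (j = (s % K + (aF Z L (s/K) + Z)) % K ∧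
          ∃ i ∈ Finset.Icc 1 (bF Z L (s/K+1) - bF Z L (s/K)),
          k = (s % K + K - Z + i) % K)) := by
  obtain ⟨hK0, hkey, hbZ, hZL⟩ := key_facts hn hZ hL hKZ hK
  unfold P
  set p := s / K with hp
  set q0 := s % K with hq0def
  rcases Nat.even_or_odd p with hpar | hpar
  · have hp2 : p % 2 = 0 := Nat.even_iff.mp hpar
    have hstep : aF Z L (p+1) = aF Z L p + L := aF_succ_even Z L p hp2
    have hbstep : bF Z L (p+1) = bF Z L p + Z := bF_succ_even Z L p hp2
    have hdiv : p/2*(Z+L) = aF Z L p := aF_div2_even hp2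
    constructor
    · rintro (⟨_, ⟨hj', i, hi, hk'⟩ | ⟨hj', i, hi, hk'⟩⟩ | ⟨hp2', _⟩)
      · refine Or.inl ⟨hj', i, Finset.mem_Icc.mpr ?_, ?_⟩
        · rw [Finset.mem_Icc] at hi; omega
        · rw [hk']; congr 1; omega
      · refine Or.inr ⟨?_, i, Finset.mem_Icc.mpr ?_, hk'⟩
        · rw [hj']; congr 1; omega
        · rw [Finset.mem_Icc] at hi; omega
      · omega
    · rintro (⟨hj', i, hi, hk'⟩ | ⟨hj', i, hi, hk'⟩)
      · refine Or.inl ⟨hp2, Or.inl ⟨hj', i, Finset.mem_Icc.mpr ?_, ?_⟩⟩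
        · rw [Finset.mem_Icc] at hi; omega
        · rw [hk']; congr 1; omega
      · refine Or.inl ⟨hp2, Or.inr ⟨?_, i, Finset.mem_Icc.mpr ?_, hk'⟩⟩
        · rw [hj']; congr 1; omega
        · rw [Finset.mem_Icc] at hi; omega
  · have hp2 : p % 2 = 1 := Nat.odd_iff.mp hpar
    have hstep : aF Z L (p+1) = aF Z L p + Z := aF_succ_odd Z L p hp2
    have hbstep : bF Z L (p+1) = bF Z L p + L := bF_succ_odd Z L p hp2
    have hdiv : (p-1)/2*(Z+L) + L = aF Z L p := aF_div2_odd hp2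
    have hdiv' : (p+1)/2*(Z+L) = aF Z L p + Z := aF_div2_odd' hp2
    constructor
    · rintro (⟨hp2', _⟩ | ⟨_, ⟨hj', i, hi, hk'⟩ | ⟨hj', i, hi, hk'⟩⟩)
      · omega
      · refine Or.inl ⟨hj', i, Finset.mem_Icc.mpr ?_, ?_⟩
        · rw [Finset.mem_Icc] at hi; omega
        · rw [hk']; congr 1; omega
      · refine Or.inr ⟨?_, i, Finset.mem_Icc.mpr ?_, hk'⟩
        · rw [hj']; congr 1; omega
        · rw [Finset.mem_Icc] at hi; omega
    · rintro (⟨hj', i, hi, hk'⟩ | ⟨hj', i, hi, hk'⟩)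
      · refine Or.inr ⟨hp2, Or.inl ⟨hj', i, Finset.mem_Icc.mpr ?_, ?_⟩⟩
        · rw [Finset.mem_Icc] at hi; omega
        · rw [hk']; congr 1; omega
      · refine Or.inr ⟨hp2, Or.inr ⟨?_, i, Finset.mem_Icc.mpr ?_, hk'⟩⟩
        · rw [hj']; congr 1; omega
        · rw [Finset.mem_Icc] at hi; omega

end Stmt12

namespace Stmt12

variable {K Z L n : ℕ}

lemma Reg (hn : 2 ≤ n) (hZ : 0 < Z) (hL : 0 < L) (hKZ : (2*n-1)*Z ≤ K)
    (hK : K = n*Z + (n-1)*L) {B : Fin K → Fin K → Option (Fin ((n-1)*K))}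
    (hB : ConstructionII K Z L n B) (s : Fin ((n-1)*K)) :
    (Finset.univ.filter (fun jk : Fin K × Fin K => B jk.1 jk.2 = some s)).card = Z + L := by
  obtain ⟨hK0, hkey, hbZ, hZL⟩ := key_facts hn hZ hL hKZ hK
  set p := s.val / K with hp
  set q0 := s.val % K with hq0def
  have hq0K : q0 < K := Nat.mod_lt _ hK0
  have hple : p < n-1 := (Nat.div_lt_iff_lt_mul hK0).mpr s.isLt
  set lA := aF Z L (p+1) - aF Z L p with hlA
  set lB := bF Z L (p+1) - bF Z L p with hlB
  have habp := aF_add_bF Z L p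
  have habp1 := aF_add_bF Z L (p+1)
  have hmono1 : aF Z L p ≤ aF Z L (p+1) := aF_mono Z L hZ hL (by omega)
  have hmono2 : bF Z L p ≤ bF Z L (p+1) := bF_mono Z L hZ hL (by omega)
  have hexp : (p+1)*(Z+L) = p*(Z+L) + (Z+L) := by ring
  have hlen : lA + lB = Z + L := by omega
  have haN : aF Z L (p+1) ≤ aF Z L (n-1) := aF_mono Z L hZ hL (by omega)
  have haL : L ≤ aF Z L (n-1) := by
    have h1 : aF Z L 1 = L := by have := aF_odd Z L 0; simpa using this
    have := aF_mono Z L hZ hL (by omega : 1 ≤ n-1)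
    omega
  have hwle : aF Z L p + Z ≤ K - Z := by omega
  set row2v := (q0 + (aF Z L p + Z)) % K with hrow2
  have hrow2K : row2v < K := Nat.mod_lt _ hK0
  have hrowne : row2v ≠ q0 := by
    intro heq
    have h1 : (row2v + K - q0) % K = (aF Z L p + Z) % K := by
      rw [hrow2]; exact offm hK0 _ hq0K
    rw [heq] at h1
    have h2 : (q0 + K - q0) % K = 0 := mod_char hK0 _ _ hK0 ⟨1, by omega⟩
    have h3 : (aF Z L p + Z) % K = aF Z L p + Z := Nat.mod_eq_of_lt (by omega)
    omega
  have hset : Finset.univ.filter (fun jk : Fin K × Fin K => B jk.1 jk.2 = some s) =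
      Finset.image (fun i => if i ≤ lA then
          ((⟨q0, hq0K⟩ : Fin K), (⟨(q0 + (aF Z L p + i)) % K, Nat.mod_lt _ hK0⟩ : Fin K))
        else ((⟨row2v, hrow2K⟩ : Fin K),
          (⟨(q0 + K - Z + (i - lA)) % K, Nat.mod_lt _ hK0⟩ : Fin K)))
        (Finset.Icc 1 (Z+L)) := by
    ext jk
    rw [Finset.mem_filter, Finset.mem_image]
    constructor
    · rintro ⟨_, hmem⟩
      rw [csome hB, P_iff_cells hn hZ hL hKZ hK s.isLt] at hmem
      rw [← hp, ← hq0def] at hmem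
      rcases hmem with ⟨hj', i, hi, hk'⟩ | ⟨hj', i, hi, hk'⟩
      · rw [Finset.mem_Icc] at hi
        refine ⟨i, Finset.mem_Icc.mpr ⟨hi.1, by omega⟩, ?_⟩
        rw [if_pos (show i ≤ lA by omega)]
        exact Prod.ext (Fin.ext hj'.symm) (Fin.ext hk'.symm)
      · rw [Finset.mem_Icc] at hi
        refine ⟨lA + i, Finset.mem_Icc.mpr ⟨by omega, by omega⟩, ?_⟩
        rw [if_neg (by omega)]
        have e : lA + i - lA = i := by omega
        rw [e]
        exact Prod.ext (Fin.ext hj'.symm) (Fin.ext hk'.symm)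
    · rintro ⟨i, hi, hjk⟩
      rw [Finset.mem_Icc] at hi
      refine ⟨Finset.mem_univ _, ?_⟩
      rw [csome hB, P_iff_cells hn hZ hL hKZ hK s.isLt]
      rw [← hp, ← hq0def]
      by_cases hc : i ≤ lA
      · rw [if_pos hc] at hjk
        rw [← hjk]
        exact Or.inl ⟨rfl, i, Finset.mem_Icc.mpr ⟨hi.1, by omega⟩, rfl⟩
      · rw [if_neg hc] at hjk
        rw [← hjk]
        exact Or.inr ⟨rfl, i - lA, Finset.mem_Icc.mpr ⟨by omega, by omega⟩, rfl⟩
  rw [hset, Finset.card_image_of_injOn, Nat.card_Icc]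
  · omega
  · intro i1 h1 i2 h2 heq
    dsimp only at heq
    rw [Finset.coe_Icc, Set.mem_Icc] at h1 h2
    by_cases c1 : i1 ≤ lA <;> by_cases c2 : i2 ≤ lA
    · rw [if_pos c1, if_pos c2] at heq
      have h3 : (q0 + (aF Z L p + i1)) % K = (q0 + (aF Z L p + i2)) % K :=
        congrArg (fun x => (Prod.snd x : Fin K).val) heq
      have h4 := mod_add_cancel (x := q0) h3
      have h5 : aF Z L p + i1 = aF Z L p + i2 := by
        apply mod_inj_window hK0 (by omega) (by omega) h4
      omega
    · rw [if_pos c1, if_neg c2] at heq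
      have h3 : q0 = row2v := congrArg (fun x => (Prod.fst x : Fin K).val) heq
      exact absurd h3.symm hrowne
    · rw [if_neg c1, if_pos c2] at heq
      have h3 : row2v = q0 := congrArg (fun x => (Prod.fst x : Fin K).val) heq
      exact absurd h3 hrowne
    · rw [if_neg c1, if_neg c2] at heq
      have h3 : (q0 + K - Z + (i1 - lA)) % K = (q0 + K - Z + (i2 - lA)) % K :=
        congrArg (fun x => (Prod.snd x : Fin K).val) heq
      have e1 : q0 + K - Z + (i1 - lA) = q0 + (K - Z + (i1 - lA)) := by omega
      have e2 : q0 + K - Z + (i2 - lA) = q0 + (K - Z + (i2 - lA)) := by omega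
      rw [e1, e2] at h3
      have h4 := mod_add_cancel (x := q0) h3
      have h5 : K - Z + (i1 - lA) = K - Z + (i2 - lA) := by
        apply mod_inj_window hK0 (by omega) (by omega) h4
      omega

end Stmt12

namespace Stmt12

variable {K Z L n : ℕ}

lemma colB_nonstar (hK0 : 0 < K) (hZ : 0 < Z) (hZK : Z ≤ K) {i cOff : ℕ}
    (hi1 : 1 ≤ i) (hiK : i < K) (hoff : cOff = (K - Z + i) % K)
    (h1 : cOff ≠ 0) (h2 : cOff ≤ K - Z) : Z < i := by
  rcases Nat.lt_trichotomy i Z with hlt | heq | hgt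
  · have : (K - Z + i) % K = K - Z + i := Nat.mod_eq_of_lt (by omega)
    omega
  · have : (K - Z + i) % K = 0 := mod_char hK0 _ _ hK0 ⟨1, by omega⟩
    omega
  · exact hgt

lemma C4 (hn : 2 ≤ n) (hZ : 0 < Z) (hL : 0 < L) (hKZ : (2*n-1)*Z ≤ K)
    (hK : K = n*Z + (n-1)*L) {B : Fin K → Fin K → Option (Fin ((n-1)*K))}
    (hB : ConstructionII K Z L n B) (s : Fin ((n-1)*K)) (j : Fin K)
    (hex : ∃ k, B j k = some s) :
    (Finset.univ.filter
      (fun k : Fin K => (∃ j', B j' k = some s) ∧ B j k ≠ none)).card ≤ L := by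
  obtain ⟨hK0, hkey, hbZ, hZL⟩ := key_facts hn hZ hL hKZ hK
  set p := s.val / K with hp
  set q0 := s.val % K with hq0def
  have hq0K : q0 < K := Nat.mod_lt _ hK0
  have hple : p < n-1 := (Nat.div_lt_iff_lt_mul hK0).mpr s.isLt
  set lA := aF Z L (p+1) - aF Z L p with hlA
  set lB := bF Z L (p+1) - bF Z L p with hlB
  have haN : aF Z L (p+1) ≤ aF Z L (n-1) := aF_mono Z L hZ hL (by omega)
  have hmono1 : aF Z L p ≤ aF Z L (p+1) := aF_mono Z L hZ hL (by omega)
  have hwle : aF Z L p + Z ≤ K - Z := by omega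
  have hZK : Z ≤ K := by omega
  have hLK : L < K := by
    have h1 : aF Z L 1 = L := by have := aF_odd Z L 0; simpa using this
    have := aF_mono Z L hZ hL (by omega : 1 ≤ n-1)
    omega
  have hlensP : (lA = L ∧ lB = Z) ∨ (lA = Z ∧ lB = L) := by
    rcases Nat.even_or_odd p with hpar | hpar
    · have h1 := aF_succ_even Z L p (Nat.even_iff.mp hpar)
      have h2 := bF_succ_even Z L p (Nat.even_iff.mp hpar)
      have h3 : bF Z L p ≤ bF Z L (p+1) := bF_mono Z L hZ hL (by omega)
      exact Or.inl ⟨by omega, by omega⟩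
    · have h1 := aF_succ_odd Z L p (Nat.odd_iff.mp hpar)
      have h2 := bF_succ_odd Z L p (Nat.odd_iff.mp hpar)
      have h3 : bF Z L p ≤ bF Z L (p+1) := bF_mono Z L hZ hL (by omega)
      exact Or.inr ⟨by omega, by omega⟩
  set row2v := (q0 + (aF Z L p + Z)) % K with hrow2
  have hrow2K : row2v < K := Nat.mod_lt _ hK0
  obtain ⟨k0, hk0⟩ := hex
  rw [csome hB, P_iff_cells hn hZ hL hKZ hK s.isLt] at hk0
  rw [← hp, ← hq0def] at hk0
  have hrow : j.val = q0 ∨ j.val = row2v := by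
    rcases hk0 with ⟨h, -⟩ | ⟨h, -⟩
    · exact Or.inl h
    · rw [← hrow2] at h
      exact Or.inr h
  clear hk0
  have hcols : ∀ k : Fin K, (∃ j', B j' k = some s) →
      (∃ i, (1 ≤ i ∧ i ≤ lA) ∧ k.val = (q0 + (aF Z L p + i)) % K) ∨
      (∃ i, (1 ≤ i ∧ i ≤ lB) ∧ k.val = (q0 + K - Z + i) % K) := by
    rintro k ⟨j', hj'⟩
    rw [csome hB, P_iff_cells hn hZ hL hKZ hK s.isLt] at hj'
    rw [← hp, ← hq0def] at hj'
    rcases hj' with ⟨-, i, hi, hk'⟩ | ⟨-, i, hi, hk'⟩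
    · rw [Finset.mem_Icc] at hi
      exact Or.inl ⟨i, ⟨hi.1, by omega⟩, hk'⟩
    · rw [Finset.mem_Icc] at hi
      exact Or.inr ⟨i, ⟨hi.1, by omega⟩, hk'⟩
  rcases hrow with hr | hr
  · -- row q0
    refine le_trans (Finset.card_le_card (?_ : _ ⊆ Finset.image (fun i =>
        if i ≤ lA then (⟨(q0 + (aF Z L p + i)) % K, Nat.mod_lt _ hK0⟩ : Fin K)
        else (⟨(q0 + K - Z + i) % K, Nat.mod_lt _ hK0⟩ : Fin K)) (Finset.Icc 1 L)))
      (le_trans Finset.card_image_le (by rw [Nat.card_Icc]; omega))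
    intro k hk
    rw [Finset.mem_filter] at hk
    obtain ⟨-, hcol, hns⟩ := hk
    have hns' : ¬ (j.val + K - k.val) % K < Z := fun hcon => hns ((hB.1 j k).mpr hcon)
    rw [hr, star_iff hK0 hZ hq0K k.isLt] at hns'
    push_neg at hns'
    rcases hcols k hcol with ⟨i, hi, hk'⟩ | ⟨i, hi, hk'⟩
    · exact Finset.mem_image.mpr ⟨i, Finset.mem_Icc.mpr ⟨hi.1, by omega⟩,
        by rw [if_pos hi.2]; exact Fin.ext hk'.symm⟩
    · have hoff : (k.val + K - q0) % K = (K - Z + i) % K := by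
        rw [hk']
        have e : q0 + K - Z + i = q0 + (K - Z + i) := by omega
        rw [e]
        exact offm hK0 _ hq0K
      have hZi : Z < i := colB_nonstar hK0 hZ hZK hi.1 (by omega) hoff hns'.1 (by omega)
      rcases hlensP with ⟨hA1, hB1⟩ | ⟨hA1, hB1⟩
      · exact absurd hZi (by omega)
      · exact Finset.mem_image.mpr ⟨i, Finset.mem_Icc.mpr ⟨by omega, by omega⟩,
          by rw [if_neg (by omega)]; exact Fin.ext hk'.symm⟩
  · -- row row2v
    refine le_trans (Finset.card_le_card (?_ : _ ⊆ Finset.image (fun i =>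
        if i ≤ lB then (⟨(q0 + K - Z + i) % K, Nat.mod_lt _ hK0⟩ : Fin K)
        else (⟨(q0 + (aF Z L p + i)) % K, Nat.mod_lt _ hK0⟩ : Fin K)) (Finset.Icc 1 L)))
      (le_trans Finset.card_image_le (by rw [Nat.card_Icc]; omega))
    intro k hk
    rw [Finset.mem_filter] at hk
    obtain ⟨-, hcol, hns⟩ := hk
    have hns' : ¬ (j.val + K - k.val) % K < Z := fun hcon => hns ((hB.1 j k).mpr hcon)
    rw [hr, star_iff hK0 hZ hrow2K k.isLt] at hns'
    push_neg at hns'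
    rcases hcols k hcol with ⟨i, hi, hk'⟩ | ⟨i, hi, hk'⟩
    · have hoff : (k.val + K - row2v) % K = ((aF Z L p + i) + (K - (aF Z L p + Z))) % K := by
        rw [hk', hrow2]
        exact off_shift hK0 hq0K (by omega) _
      have e : (aF Z L p + i) + (K - (aF Z L p + Z)) = K - Z + i := by omega
      rw [e] at hoff
      have hZi : Z < i := colB_nonstar hK0 hZ hZK hi.1 (by omega) hoff hns'.1 (by omega)
      rcases hlensP with ⟨hA1, hB1⟩ | ⟨hA1, hB1⟩
      · exact Finset.mem_image.mpr ⟨i, Finset.mem_Icc.mpr ⟨by omega, by omega⟩,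
          by rw [if_neg (by omega)]; exact Fin.ext hk'.symm⟩
      · exact absurd hZi (by omega)
    · exact Finset.mem_image.mpr ⟨i, Finset.mem_Icc.mpr ⟨hi.1, by omega⟩,
        by rw [if_pos hi.2]; exact Fin.ext hk'.symm⟩

end Stmt12

/-- For `n ≥ 2`, `K ≥ (2n-1)Z`, and `L = (K-nZ)/(n-1)` a positive
integer (i.e. `K = nZ + (n-1)L` with `L > 0`), the Construction II array is
well defined (such an array `B` exists), and any such `B` is a
`(Z+L)`-regular `(K, L, K, Z, (n-1)K)` EPDA. -/
theorem stmt12 (K Z L n : ℕ) (hn : 2 ≤ n) (hZ : 0 < Z) (hL : 0 < L)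
    (hKZ : (2 * n - 1) * Z ≤ K) (hK : K = n * Z + (n - 1) * L) :
    (∃ B : Fin K → Fin K → Option (Fin ((n - 1) * K)), ConstructionII K Z L n B) ∧
    (∀ B : Fin K → Fin K → Option (Fin ((n - 1) * K)), ConstructionII K Z L n B →
      IsEPDA L Z B ∧ IsRegularEPDA (Z + L) B) := by
  constructor
  · exact Stmt12.exists_B hn hZ hL hKZ hK
  · intro B hB
    refine ⟨⟨fun k => Stmt12.C1 hn hZ hL hKZ hK hB k,
      fun s => Stmt12.C2 hn hZ hL hKZ hK hB s,
      fun k j₁ j₂ s h1 h2 => Stmt12.C3 hn hZ hL hKZ hK hB k j₁ j₂ s h1 h2,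
      fun s j hex => Stmt12.C4 hn hZ hL hKZ hK hB s j hex⟩,
      fun s => Stmt12.Reg hn hZ hL hKZ hK hB s⟩
end

section
/- In Construction II with n ≥ 2, K ≥ (2n-1)Z, L = (K-nZ)/(n-1): for even p, the column sets {<(p/2)(Z+L)+q+i>_K : i ∈ [L]} and {<q-Z+i>_K : i ∈ [Z]} are disjoint; for odd p, the column sets {<((p-1)/2)(Z+L)+L+q+i>_K : i ∈ [Z]} and {<q-Z+i>_K : i ∈ [L]} are disjoint. Hence no integer appears twice in any column of B. -/
open scoped Classical

lemma mod_ne_aux (K m a b : ℕ) (h1 : a < b) (h2 : b - a < K) :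
    (m + a) % K ≠ (m + b) % K := by
  intro h
  have h3 : a ≡ b [MOD K] := Nat.ModEq.add_left_cancel' m h
  have h4 : K ∣ b - a := (Nat.modEq_iff_dvd' h1.le).mp h3
  have h5 := Nat.le_of_dvd (by omega) h4
  omega

lemma bound_aux (K Z L n r : ℕ) (hn : 2 ≤ n) (hK : K = n * Z + (n - 1) * L)
    (hr : r + 1 ≤ n - 1) : r * (Z + L) + (Z + L) + Z ≤ K := by
  obtain ⟨w, rfl⟩ : ∃ w, n = w + 2 := ⟨n - 2, by omega⟩
  have h1 : (r + 1) * (Z + L) ≤ (w + 1) * (Z + L) := Nat.mul_le_mul (by omega) le_rfl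
  have h2 : (w + 1) * (Z + L) + Z = K := by
    rw [hK]
    have : w + 2 - 1 = w + 1 := rfl
    rw [this]; ring
  have h3 : (r + 1) * (Z + L) = r * (Z + L) + (Z + L) := by ring
  linarith

lemma disj_even_aux (K Z L n p m i i' : ℕ) (hn : 2 ≤ n) (hZ : 0 < Z)
    (hK : K = n * Z + (n - 1) * L) (hp : p ≤ n - 2)
    (hi1 : 1 ≤ i) (hi2 : i ≤ L) (hj1 : 1 ≤ i') (hj2 : i' ≤ Z) :
    (p / 2 * (Z + L) + m + i) % K ≠ (m + K - Z + i') % K := by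
  have hb := bound_aux K Z L n (p / 2) hn hK (by omega)
  obtain ⟨c, hc⟩ : ∃ c, c = p / 2 * (Z + L) := ⟨_, rfl⟩
  rw [← hc] at hb ⊢
  clear hc
  have e1 : c + m + i = m + (c + i) := by omega
  have e2 : m + K - Z + i' = m + (K - Z + i') := by omega
  rw [e1, e2]
  exact mod_ne_aux K m _ _ (by omega) (by omega)

lemma disj_odd_aux (K Z L n p m i i' : ℕ) (hn : 2 ≤ n) (hZ : 0 < Z)
    (hK : K = n * Z + (n - 1) * L) (hp : p ≤ n - 2)
    (hi1 : 1 ≤ i) (hi2 : i ≤ Z) (hj1 : 1 ≤ i') (hj2 : i' ≤ L) :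
    ((p - 1) / 2 * (Z + L) + L + m + i) % K ≠ (m + K - Z + i') % K := by
  have hb := bound_aux K Z L n ((p - 1) / 2) hn hK (by omega)
  obtain ⟨c, hc⟩ : ∃ c, c = (p - 1) / 2 * (Z + L) := ⟨_, rfl⟩
  rw [← hc] at hb ⊢
  clear hc
  have e1 : c + L + m + i = m + (c + L + i) := by omega
  have e2 : m + K - Z + i' = m + (K - Z + i') := by omega
  rw [e1, e2]
  exact mod_ne_aux K m _ _ (by omega) (by omega)

/-- In Construction II (with `n ≥ 2`, `K = nZ + (n-1)L ≥ (2n-1)Z`),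
for each `p ∈ [0:n-2]` and `q ∈ [K]` (1-indexed; below columns are written
0-indexed modulo `K`): if `p` is even, the column sets
`{<(p/2)(Z+L)+q+i>_K : i ∈ [L]}` and `{<q-Z+i>_K : i ∈ [Z]}` are disjoint;
if `p` is odd, the column sets `{<((p-1)/2)(Z+L)+L+q+i>_K : i ∈ [Z]}` and
`{<q-Z+i>_K : i ∈ [L]}` are disjoint. Hence no integer appears twice in any
column of the Construction II array `B`. -/
theorem stmt13 (K Z L n p q : ℕ) (hn : 2 ≤ n) (hZ : 0 < Z) (hL : 0 < L)
    (hK : K = n * Z + (n - 1) * L) (hKZ : (2 * n - 1) * Z ≤ K)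
    (hp : p ≤ n - 2) (hq1 : 1 ≤ q) (hqK : q ≤ K) :
    (p % 2 = 0 →
      Disjoint
        ((Finset.Icc 1 L).image (fun i => ((p / 2) * (Z + L) + q + i - 1) % K))
        ((Finset.Icc 1 Z).image (fun i => (q + K - Z + i - 1) % K))) ∧
    (p % 2 = 1 →
      Disjoint
        ((Finset.Icc 1 Z).image (fun i => (((p - 1) / 2) * (Z + L) + L + q + i - 1) % K))
        ((Finset.Icc 1 L).image (fun i => (q + K - Z + i - 1) % K))) ∧
    (∀ B : Fin K → Fin K → Option (Fin ((n - 1) * K)), ConstructionII K Z L n B →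
      ∀ (k : Fin K) (j₁ j₂ : Fin K) (s : Fin ((n - 1) * K)),
        B j₁ k = some s → B j₂ k = some s → j₁ = j₂) := by

  have hZK : Z ≤ K := by
    have h2Z : 2 * Z ≤ n * Z := Nat.mul_le_mul hn le_rfl
    have : 2 * Z ≤ K := hK ▸ le_trans h2Z (Nat.le_add_right _ _)
    omega
  refine ⟨fun _ => ?_, fun _ => ?_, ?_⟩
  · rw [Finset.disjoint_left]
    rintro x hx hx'
    simp only [Finset.mem_image, Finset.mem_Icc] at hx hx'
    obtain ⟨i, ⟨hi1, hi2⟩, rfl⟩ := hx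
    obtain ⟨i', ⟨hj1, hj2⟩, heq⟩ := hx'
    have e1 : p / 2 * (Z + L) + q + i - 1 = p / 2 * (Z + L) + (q - 1) + i := by
      generalize p / 2 * (Z + L) = c; omega
    have e2 : q + K - Z + i' - 1 = (q - 1) + K - Z + i' := by omega
    have hne := disj_even_aux K Z L n p (q - 1) i i' hn hZ hK hp hi1 hi2 hj1 hj2
    rw [← e1, ← e2] at hne
    exact hne heq.symm
  · rw [Finset.disjoint_left]
    rintro x hx hx'
    simp only [Finset.mem_image, Finset.mem_Icc] at hx hx'
    obtain ⟨i, ⟨hi1, hi2⟩, rfl⟩ := hx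
    obtain ⟨i', ⟨hj1, hj2⟩, heq⟩ := hx'
    have e1 : (p - 1) / 2 * (Z + L) + L + q + i - 1 = (p - 1) / 2 * (Z + L) + L + (q - 1) + i := by
      generalize (p - 1) / 2 * (Z + L) = c; omega
    have e2 : q + K - Z + i' - 1 = (q - 1) + K - Z + i' := by omega
    have hne := disj_odd_aux K Z L n p (q - 1) i i' hn hZ hK hp hi1 hi2 hj1 hj2
    rw [← e1, ← e2] at hne
    exact hne heq.symm
  · intro B hB k j₁ j₂ s h1 h2
    obtain ⟨-, hspec⟩ := hB
    have hK0 : 0 < K :=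
      hK ▸ Nat.lt_of_lt_of_le (Nat.mul_pos (by omega) hZ) (Nat.le_add_right _ _)
    have hp' : s.val / K ≤ n - 2 := by
      have hs := s.isLt
      have : s.val / K < n - 1 := (Nat.div_lt_iff_lt_mul hK0).mpr hs
      omega
    have d1 := (hspec j₁ k s).mp h1
    have d2 := (hspec j₂ k s).mp h2
    rcases d1 with ⟨he1, hc1⟩ | ⟨ho1, hc1⟩ <;> rcases d2 with ⟨he2, hc2⟩ | ⟨ho2, hc2⟩
    · rcases hc1 with ⟨hj, i, hi, hk⟩ | ⟨hj, i, hi, hk⟩ <;>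
        rcases hc2 with ⟨hj', i', hi', hk'⟩ | ⟨hj', i', hi', hk'⟩
      · exact Fin.val_injective (hj.trans hj'.symm)
      · simp only [Finset.mem_Icc] at hi hi'
        exact absurd (hk.symm.trans hk')
          (disj_even_aux K Z L n (s.val / K) (s.val % K) i i' hn hZ hK hp'
            hi.1 hi.2 hi'.1 hi'.2)
      · simp only [Finset.mem_Icc] at hi hi'
        exact absurd (hk'.symm.trans hk)
          (disj_even_aux K Z L n (s.val / K) (s.val % K) i' i hn hZ hK hp'
            hi'.1 hi'.2 hi.1 hi.2)
      · exact Fin.val_injective (hj.trans hj'.symm)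
    · omega
    · omega
    · rcases hc1 with ⟨hj, i, hi, hk⟩ | ⟨hj, i, hi, hk⟩ <;>
        rcases hc2 with ⟨hj', i', hi', hk'⟩ | ⟨hj', i', hi', hk'⟩
      · exact Fin.val_injective (hj.trans hj'.symm)
      · simp only [Finset.mem_Icc] at hi hi'
        exact absurd (hk.symm.trans hk')
          (disj_odd_aux K Z L n (s.val / K) (s.val % K) i i' hn hZ hK hp'
            hi.1 hi.2 hi'.1 hi'.2)
      · simp only [Finset.mem_Icc] at hi hi'
        exact absurd (hk'.symm.trans hk)
          (disj_odd_aux K Z L n (s.val / K) (s.val % K) i' i hn hZ hK hp'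
            hi'.1 hi'.2 hi.1 hi.2)
      · exact Fin.val_injective (hj.trans hj'.symm)
end

section
/- For a (K,L,M,N) multi-antenna coded caching system with t = KM/N an integer, K = nt + (n-1)L for an integer n ≥ 2, and L ≥ t, a delivery time T = (K-t)/(t+L) = n-1 is achievable with subpacketization number K/gcd(K,t,L). -/
open scoped Classical

/-!
Dividing by `γ`, write `K = γK'`, `t = γZ`, `L = γ(Z + E)`, so `K' = (m+1)Z + m(Z+E)` with
`m = n - 1`. Construction II fills a `K' × K'` array with the `mK'` symbols `(q, u)`: cell
`(j, e)` is a star iff the cyclic offset `e - j` is below `Z`, and `(q, u)` sits in row `u` at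
the offsets `[(q+1)Z, (q+2)Z) ∪ [(m+1)Z + qE, (m+1)Z + (q+1)E)` and in row `u + (q+1)Z` in the
`Z` columns where row `u` has its stars. These offset blocks partition `[Z, K')`, so every
non-star cell carries exactly one symbol, and the subarray of `(q, u)` has the two rows `u` and
`u + (q+1)Z`, each with at most `Z + E` integer entries. Placing `γ` copies side by side
multiplies the row bound by `γ`, and the delivery time is `S/F = m = (K - t)/(t + L)`.
-/

open Finset

theorem Fin.modNat_finProdFinEquiv {m n : ℕ} (x : Fin m × Fin n) :
    (finProdFinEquiv x).modNat = x.2 := by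
  ext
  simp [Fin.modNat, finProdFinEquiv_apply_val, Nat.mod_eq_of_lt x.2.isLt]

theorem Fin.card_filter_modNat_s14 {g K : ℕ} (p : Fin K → Prop) [DecidablePred p] :
    (univ.filter fun k : Fin (g * K) => p k.modNat).card = g * (univ.filter p).card := by
  calc _ = (univ ×ˢ univ.filter p : Finset (Fin g × Fin K)).card :=
        card_equiv finProdFinEquiv.symm (by simp [finProdFinEquiv_symm_apply])
    _ = g * (univ.filter p).card := by simp [card_product]

theorem Fin.card_filter_val_sub_mem_le {K : ℕ} [NeZero K] (u : Fin K) (I : Finset ℕ) :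
    (univ.filter fun k : Fin K => ((k - u : Fin K) : ℕ) ∈ I).card ≤ I.card :=
  card_le_card_of_injOn (fun k => ((k - u : Fin K) : ℕ)) (fun k hk => by simpa using hk)
    (fun k₁ _ k₂ _ h => sub_left_inj.mp (Fin.ext h))

theorem Fin.card_filter_val_sub_lt {K : ℕ} [NeZero K] (e : Fin K) {Z : ℕ} (hZ : Z ≤ K) :
    (univ.filter fun j : Fin K => ((e - j : Fin K) : ℕ) < Z).card = Z :=
  calc _ = (univ.filter fun i : Fin K => (i : ℕ) < Z).card :=
        card_equiv (Equiv.subLeft e) (by simp)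
    _ = Z := Fin.card_filter_val_lt.trans (min_eq_right hZ)

theorem IsEPDA.concat {L Z K F S g : ℕ} {A : Fin F → Fin K → Option (Fin S)}
    (hA : IsEPDA L Z A) (hg : 0 < g) :
    IsEPDA (g * L) Z (fun j (k : Fin (g * K)) => A j k.modNat) := by
  obtain ⟨hstar, hocc, hcol, hrow⟩ := hA
  refine ⟨fun k => hstar _, fun s => ?_, fun k => hcol _, fun s j hj => ?_⟩
  · obtain ⟨j, k, hjk⟩ := hocc s
    exact ⟨j, finProdFinEquiv (⟨0, hg⟩, k), by simpa only [Fin.modNat_finProdFinEquiv]⟩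
  · obtain ⟨k, hk⟩ := hj
    rw [Fin.card_filter_modNat_s14 (fun c => (∃ j', A j' c = some s) ∧ A j c ≠ none)]
    exact Nat.mul_le_mul_left g (hrow s j ⟨_, hk⟩)

namespace ConstructionII

def block (a w q : ℕ) : Finset ℕ := Ico (a + q * w) (a + (q + 1) * w)

theorem eq_of_mem_block {a w q q' v : ℕ} (h : v ∈ block a w q) (h' : v ∈ block a w q') :
    q = q' := by
  simp only [block, mem_Ico] at h h'
  have hw : 0 < w := Nat.pos_of_ne_zero fun hw => by simp [hw] at h; omega
  have hdiv : ∀ r, a + r * w ≤ v → v < a + (r + 1) * w → (v - a) / w = r := fun r h₁ h₂ =>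
    Nat.div_eq_of_lt_le (by omega) (by omega)
  rw [← hdiv q h.1 h.2, ← hdiv q' h'.1 h'.2]

theorem exists_mem_block {a w m v : ℕ} (h₁ : a ≤ v) (h₂ : v < a + m * w) :
    ∃ q < m, v ∈ block a w q := by
  have hw : 0 < w := Nat.pos_of_ne_zero fun hw => by simp [hw] at h₂; omega
  refine ⟨(v - a) / w, (Nat.div_lt_iff_lt_mul hw).mpr (by omega), ?_⟩
  have := Nat.div_add_mod (v - a) w
  have := Nat.mod_lt (v - a) hw
  simp only [block, mem_Ico]
  rw [add_one_mul, mul_comm _ w]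
  omega

theorem block_subset {a w m q : ℕ} (hq : q < m) : block a w q ⊆ Ico a (a + m * w) := by
  have : (q + 1) * w ≤ m * w := Nat.mul_le_mul_right w hq
  intro v hv
  simp only [block, mem_Ico] at hv ⊢
  omega

theorem card_block (a w q : ℕ) : (block a w q).card = w := by
  simp only [block, Nat.card_Ico, add_one_mul]
  omega

variable (m Z E : ℕ)

def primaryOffsets (q : ℕ) : Finset ℕ := block Z Z q ∪ block ((m + 1) * Z) E q

/-- The offsets `[K - (q+1)Z, K - qZ)` from row `u + (q+1)Z` of the star columns of row `u`. -/
def secondaryOffsets (q : ℕ) : Finset ℕ := block ((m + 1) * Z + m * E) Z (m - 1 - q)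

variable {m Z E}

theorem card_primaryOffsets_le (q : ℕ) : (primaryOffsets m Z E q).card ≤ Z + E :=
  (card_union_le _ _).trans (by rw [card_block, card_block])

theorem primaryOffsets_subset {q : ℕ} (hq : q < m) :
    primaryOffsets m Z E q ⊆ Ico Z ((m + 1) * Z + m * E) := by
  have h₁ := block_subset (a := Z) (w := Z) hq
  have h₂ := block_subset (a := (m + 1) * Z) (w := E) hq
  have : (m + 1) * Z = Z + m * Z := by ring
  intro v hv
  rw [mem_Ico]
  rcases mem_union.mp hv with hv | hv
  · have := mem_Ico.mp (h₁ hv); omega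
  · have := mem_Ico.mp (h₂ hv); omega

theorem secondaryOffsets_subset {q : ℕ} (hq : q < m) :
    secondaryOffsets m Z E q ⊆ Ico ((m + 1) * Z + m * E) ((m + 1) * Z + m * (Z + E)) := by
  have : (m + 1) * Z + m * (Z + E) = (m + 1) * Z + m * E + m * Z := by ring
  rw [this]
  exact block_subset (by omega)

theorem eq_of_mem_primaryOffsets {q q' v : ℕ} (hq : q < m) (hq' : q' < m)
    (h : v ∈ primaryOffsets m Z E q) (h' : v ∈ primaryOffsets m Z E q') : q = q' := by
  have h₁ := block_subset (a := Z) (w := Z) hq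
  have h₁' := block_subset (a := Z) (w := Z) hq'
  have h₂ := block_subset (a := (m + 1) * Z) (w := E) hq
  have h₂' := block_subset (a := (m + 1) * Z) (w := E) hq'
  have : (m + 1) * Z = Z + m * Z := by ring
  simp only [primaryOffsets, mem_union] at h h'
  rcases h with h | h <;> rcases h' with h' | h'
  · exact eq_of_mem_block h h'
  · have := mem_Ico.mp (h₁ h); have := mem_Ico.mp (h₂' h'); omega
  · have := mem_Ico.mp (h₂ h); have := mem_Ico.mp (h₁' h'); omega
  · exact eq_of_mem_block h h'

theorem disjoint_primaryOffsets_secondaryOffsets {q q' : ℕ} (hq : q < m) (hq' : q' < m) :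
    Disjoint (primaryOffsets m Z E q) (secondaryOffsets m Z E q') := by
  refine disjoint_left.mpr fun v hp hs => ?_
  have := mem_Ico.mp (primaryOffsets_subset hq hp)
  have := mem_Ico.mp (secondaryOffsets_subset hq' hs)
  omega

theorem eq_of_mem_secondaryOffsets {q q' v : ℕ} (hq : q < m) (hq' : q' < m)
    (h : v ∈ secondaryOffsets m Z E q) (h' : v ∈ secondaryOffsets m Z E q') : q = q' := by
  have := eq_of_mem_block h h'
  omega

theorem exists_mem_offsets {v : ℕ} (hv : Z ≤ v) (hv' : v < (m + 1) * Z + m * (Z + E)) :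
    ∃ q < m, v ∈ primaryOffsets m Z E q ∨ v ∈ secondaryOffsets m Z E q := by
  have h₀ : (m + 1) * Z = Z + m * Z := by ring
  have h₃ : m * (Z + E) = m * Z + m * E := by ring
  simp only [primaryOffsets, secondaryOffsets, mem_union]
  by_cases h₁ : v < (m + 1) * Z
  · obtain ⟨q, hq, h⟩ := exists_mem_block hv (h₀ ▸ h₁)
    exact ⟨q, hq, .inl (.inl h)⟩
  by_cases h₂ : v < (m + 1) * Z + m * E
  · obtain ⟨q, hq, h⟩ := exists_mem_block (by omega) h₂
    exact ⟨q, hq, .inl (.inr h)⟩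
  · obtain ⟨q, hq, h⟩ := exists_mem_block (a := (m + 1) * Z + m * E) (w := Z) (m := m) (v := v)
      (by omega) (by omega)
    exact ⟨m - 1 - q, by omega, .inr (by rwa [show m - 1 - (m - 1 - q) = q by omega])⟩

variable {K : ℕ} [NeZero K]

variable (Z) in
def shift (q : ℕ) : Fin K := Fin.ofNat K ((q + 1) * Z)

theorem val_shift (hK : K = (m + 1) * Z + m * (Z + E)) {q : ℕ} (hq : q < m) :
    (shift Z q : Fin K).val = (q + 1) * Z := by
  refine (Fin.val_ofNat _ _).trans (Nat.mod_eq_of_lt ?_)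
  rcases Nat.eq_zero_or_pos Z with rfl | hZ
  · simpa using NeZero.pos K
  · have : (q + 1) * Z ≤ m * Z := Nat.mul_le_mul_right Z hq
    have : (m + 1) * Z = m * Z + Z := by ring
    omega

theorem val_add_shift_lt_iff (hK : K = (m + 1) * Z + m * (Z + E)) {q : ℕ} (hq : q < m)
    (y : Fin K) : ((y + shift Z q : Fin K) : ℕ) < Z ↔ (y : ℕ) ∈ secondaryOffsets m Z E q := by
  have h₁ : (m - 1 - q) * Z + (q + 1) * Z = m * Z := by
    rw [← add_mul, show m - 1 - q + (q + 1) = m by omega]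
  have h₂ : (m - 1 - q + 1) * Z = (m - 1 - q) * Z + Z := add_one_mul _ _
  have h₃ : Z ≤ (q + 1) * Z := Nat.le_mul_of_pos_left Z q.succ_pos
  have h₄ : K = (m + 1) * Z + m * E + m * Z := by rw [hK]; ring
  have := y.isLt
  rw [Fin.val_add_eq_ite, val_shift hK hq, secondaryOffsets, block, mem_Ico]
  split_ifs <;> omega

theorem val_lt_of_val_add_shift_mem_block (hK : K = (m + 1) * Z + m * (Z + E)) {q : ℕ}
    (hq : q < m) (y : Fin K) (h : ((y + shift Z q : Fin K) : ℕ) ∈ block Z Z q) :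
    (y : ℕ) < Z := by
  have h₁ : (q + 1) * Z = Z + q * Z := by ring
  have := y.isLt
  rw [Fin.val_add_eq_ite, val_shift hK hq] at h
  rw [block, mem_Ico] at h
  split_ifs at h <;> omega

variable (m Z E) in
def Occupies (p : Fin m × Fin K) (j e : Fin K) : Prop :=
  (j = p.2 ∧ ((e - p.2 : Fin K) : ℕ) ∈ primaryOffsets m Z E p.1) ∨
  (j = p.2 + shift Z p.1 ∧ ((e - p.2 : Fin K) : ℕ) < Z)

theorem occupies_iff_offset (hK : K = (m + 1) * Z + m * (Z + E)) (q : Fin m) (u j e : Fin K) :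
    Occupies m Z E (q, u) j e ↔
      (u = j ∧ ((e - j : Fin K) : ℕ) ∈ primaryOffsets m Z E q) ∨
      (u = j - shift Z q ∧ ((e - j : Fin K) : ℕ) ∈ secondaryOffsets m Z E q) := by
  have hsub : ∀ x : Fin K, e - x + shift Z q = e - (x - shift Z q) := fun x => by abel
  constructor
  · rintro (⟨rfl, h⟩ | ⟨rfl, h⟩)
    · exact .inl ⟨rfl, h⟩
    · refine .inr ⟨by simp, ?_⟩
      rw [← val_add_shift_lt_iff hK q.isLt, hsub, add_sub_cancel_right]
      exact h
  · rintro (⟨rfl, h⟩ | ⟨rfl, h⟩)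
    · exact .inl ⟨rfl, h⟩
    · refine .inr ⟨by simp, ?_⟩
      rw [← hsub]
      exact (val_add_shift_lt_iff hK q.isLt _).mpr h

theorem occupies_unique (hK : K = (m + 1) * Z + m * (Z + E)) {p p' : Fin m × Fin K}
    {j e : Fin K} (h : Occupies m Z E p j e) (h' : Occupies m Z E p' j e) : p = p' := by
  obtain ⟨q, u⟩ := p
  obtain ⟨q', u'⟩ := p'
  rw [occupies_iff_offset hK] at h h'
  rcases h with ⟨rfl, hp⟩ | ⟨rfl, hs⟩ <;> rcases h' with ⟨rfl, hp'⟩ | ⟨rfl, hs'⟩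
  · rw [Fin.ext (eq_of_mem_primaryOffsets q.isLt q'.isLt hp hp')]
  · exact (disjoint_left.mp (disjoint_primaryOffsets_secondaryOffsets q.isLt q'.isLt) hp hs').elim
  · exact (disjoint_left.mp (disjoint_primaryOffsets_secondaryOffsets q'.isLt q.isLt) hp' hs).elim
  · rw [Fin.ext (eq_of_mem_secondaryOffsets q.isLt q'.isLt hs hs')]

theorem exists_occupies_iff (hK : K = (m + 1) * Z + m * (Z + E)) (j e : Fin K) :
    (∃ p, Occupies m Z E p j e) ↔ Z ≤ ((e - j : Fin K) : ℕ) := by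
  constructor
  · rintro ⟨⟨q, u⟩, h⟩
    rcases (occupies_iff_offset hK q u j e).mp h with ⟨-, hp⟩ | ⟨-, hs⟩
    · exact (mem_Ico.mp (primaryOffsets_subset q.isLt hp)).1
    · have := mem_Ico.mp (secondaryOffsets_subset q.isLt hs)
      have : Z ≤ (m + 1) * Z := Nat.le_mul_of_pos_left Z m.succ_pos
      omega
  · intro hZ
    obtain ⟨q, hq, hp | hs⟩ := exists_mem_offsets hZ (by rw [← hK]; exact (e - j).isLt)
    · exact ⟨(⟨q, hq⟩, j), (occupies_iff_offset hK _ _ _ _).mpr (.inl ⟨rfl, hp⟩)⟩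
    · exact ⟨(⟨q, hq⟩, j - shift Z q), (occupies_iff_offset hK _ _ _ _).mpr (.inr ⟨rfl, hs⟩)⟩

end ConstructionII

open ConstructionII

/-- By `occupies_unique`, `choose` picks the only symbol of the cell. -/
noncomputable def constructionII {m K : ℕ} [NeZero K] (Z E : ℕ) (j e : Fin K) :
    Option (Fin (m * K)) :=
  if h : ∃ p, Occupies m Z E p j e then some (finProdFinEquiv h.choose) else none

section

variable {m Z E K : ℕ} [NeZero K]

theorem constructionII_eq_none_iff (hK : K = (m + 1) * Z + m * (Z + E)) (j e : Fin K) :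
    constructionII (m := m) Z E j e = none ↔ ((e - j : Fin K) : ℕ) < Z := by
  rw [constructionII, ← not_le, ← exists_occupies_iff hK]
  split_ifs with h <;> simp [h]

theorem constructionII_eq_some_iff (hK : K = (m + 1) * Z + m * (Z + E)) (p : Fin m × Fin K)
    (j e : Fin K) :
    constructionII Z E j e = some (finProdFinEquiv p) ↔ Occupies m Z E p j e := by
  rw [constructionII]
  split_ifs with h
  · rw [Option.some_inj, finProdFinEquiv.apply_eq_iff_eq]
    exact ⟨fun hp => hp ▸ h.choose_spec, occupies_unique hK h.choose_spec⟩
  · exact ⟨nofun, fun hp => h ⟨p, hp⟩⟩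

theorem occupies_shift (hZ : 0 < Z) (hK : K = (m + 1) * Z + m * (Z + E)) (q : Fin m)
    (u : Fin K) : Occupies m Z E (q, u) u (u + shift Z q) := by
  refine .inl ⟨rfl, ?_⟩
  rw [add_sub_cancel_left, val_shift hK q.isLt, primaryOffsets, block, block]
  simp only [mem_union, mem_Ico]
  left
  constructor <;> nlinarith

theorem card_subarray_row_le (hK : K = (m + 1) * Z + m * (Z + E)) (q : Fin m) (u j : Fin K)
    (hj : ∃ k, Occupies m Z E (q, u) j k) :
    (univ.filter fun k => (∃ j', constructionII Z E j' k = some (finProdFinEquiv (q, u))) ∧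
      constructionII (m := m) Z E j k ≠ none).card ≤ Z + E := by
  have hcol : ∀ k, (∃ j', constructionII Z E j' k = some (finProdFinEquiv (q, u))) →
      ((k - u : Fin K) : ℕ) ∈ primaryOffsets m Z E q ∨ ((k - u : Fin K) : ℕ) < Z := by
    rintro k ⟨j', h⟩
    rcases (constructionII_eq_some_iff hK _ _ _).mp h with ⟨-, h⟩ | ⟨-, h⟩
    exacts [.inl h, .inr h]
  obtain ⟨k₀, ⟨rfl : j = u, -⟩ | ⟨rfl : j = u + shift Z q, -⟩⟩ := hj
  · refine (card_le_card fun k hk => ?_).trans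
      ((Fin.card_filter_val_sub_mem_le j _).trans (card_primaryOffsets_le (m := m) q))
    simp only [mem_filter, mem_univ, true_and, ne_eq, constructionII_eq_none_iff hK] at hk ⊢
    exact (hcol k hk.1).resolve_right hk.2
  · refine (card_le_card fun k hk => ?_).trans
      ((Fin.card_filter_val_sub_mem_le u (block ((m + 1) * Z) E q ∪ range Z)).trans ?_)
    · simp only [mem_filter, mem_univ, true_and, ne_eq, constructionII_eq_none_iff hK,
        mem_union, mem_range] at hk ⊢
      rcases hcol k hk.1 with h | h
      · rcases mem_union.mp h with h | h
        · -- row `u + (q+1)Z` has stars in the columns of the block `[(q+1)Z, (q+2)Z)` of row `u`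
          rw [show k - u = k - (u + shift Z q) + shift Z q by abel] at h
          exact absurd (val_lt_of_val_add_shift_mem_block hK q.isLt _ h) hk.2
        · exact .inl h
      · exact .inr h
    · rw [add_comm Z]
      exact (card_union_le _ _).trans (by rw [card_block, card_range])

theorem isEPDA_constructionII (hZ : 0 < Z) (hK : K = (m + 1) * Z + m * (Z + E)) :
    IsEPDA (Z + E) Z (constructionII (m := m) (K := K) Z E) := by
  have hZK : Z ≤ K := by
    have : Z ≤ (m + 1) * Z := Nat.le_mul_of_pos_left Z m.succ_pos
    omega
  refine ⟨fun e => ?_, fun s => ?_, fun e j₁ j₂ s h₁ h₂ => ?_, fun s j ⟨k, hk⟩ => ?_⟩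
  · simp_rw [constructionII_eq_none_iff hK]
    exact Fin.card_filter_val_sub_lt e hZK
  · obtain ⟨⟨q, u⟩, rfl⟩ := finProdFinEquiv.surjective s
    exact ⟨u, _, (constructionII_eq_some_iff hK _ _ _).mpr (occupies_shift hZ hK q u)⟩
  · obtain ⟨⟨q, u⟩, rfl⟩ := finProdFinEquiv.surjective s
    rw [constructionII_eq_some_iff hK] at h₁ h₂
    have hstar : ((e - u : Fin K) : ℕ) ∈ primaryOffsets m Z E q → Z ≤ ((e - u : Fin K) : ℕ) :=
      fun hp => (mem_Ico.mp (primaryOffsets_subset q.isLt hp)).1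
    rcases h₁ with ⟨rfl, hp₁⟩ | ⟨rfl, hs₁⟩ <;> rcases h₂ with ⟨rfl, hp₂⟩ | ⟨rfl, hs₂⟩
    · rfl
    · exact absurd (hstar hp₁) (not_le.mpr hs₂)
    · exact absurd (hstar hp₂) (not_le.mpr hs₁)
    · rfl
  · obtain ⟨⟨q, u⟩, rfl⟩ := finProdFinEquiv.surjective s
    exact card_subarray_row_le hK q u j ⟨k, (constructionII_eq_some_iff hK _ _ _).mp hk⟩

end

theorem deliveryTime_eq {K t L n : ℕ} (hn : 1 ≤ n) (htL : 0 < t + L)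
    (hK : K = n * t + (n - 1) * L) : ((K : ℚ) - t) / ((t : ℚ) + L) = (n : ℚ) - 1 := by
  rw [div_eq_iff (by exact_mod_cast htL.ne'), hK]
  push_cast [Nat.cast_sub hn]
  ring

theorem stmt14_general (K L t n γ : ℕ) (hn : 2 ≤ n)
    (ht0 : 0 < t) (hK : K = n * t + (n - 1) * L) (hLt : t ≤ L)
    (hγ : γ = Nat.gcd K (Nat.gcd t L)) :
    γ * (K / γ) = K ∧
    (∃ B : Fin (K / γ) → Fin (γ * (K / γ)) → Option (Fin ((n - 1) * (K / γ))),
      IsEPDA L (t / γ) B) ∧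
    (((n - 1) * (K / γ) : ℕ) : ℚ) / ((K / γ : ℕ) : ℚ) = ((K : ℚ) - t) / ((t : ℚ) + L) ∧
    ((K : ℚ) - t) / ((t : ℚ) + L) = (n : ℚ) - 1 := by
  have hT := deliveryTime_eq (by omega) (by omega) hK
  have hdvd : γ ∣ K ∧ γ ∣ t ∧ γ ∣ L := hγ ▸ ⟨Nat.gcd_dvd_left _ _,
    (Nat.gcd_dvd_right _ _).trans (Nat.gcd_dvd_left _ _),
    (Nat.gcd_dvd_right _ _).trans (Nat.gcd_dvd_right _ _)⟩
  obtain ⟨⟨K', rfl⟩, ⟨Z, rfl⟩, ⟨L', rfl⟩⟩ := hdvd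
  have hγ0 : 0 < γ := Nat.pos_of_mul_pos_right ht0
  have hZ : 0 < Z := Nat.pos_of_mul_pos_left ht0
  have hK' : K' = n * Z + (n - 1) * L' := Nat.eq_of_mul_eq_mul_left hγ0 (by rw [hK]; ring)
  obtain ⟨E, rfl⟩ : ∃ E, L' = Z + E := ⟨L' - Z, by have := Nat.le_of_mul_le_mul_left hLt hγ0; omega⟩
  have : NeZero K' := ⟨by rw [hK']; positivity⟩
  rw [Nat.mul_div_cancel_left K' hγ0, Nat.mul_div_cancel_left Z hγ0]
  refine ⟨rfl, ⟨_, (isEPDA_constructionII (m := n - 1) hZ ?_).concat hγ0⟩, ?_, hT⟩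
  · rwa [Nat.sub_add_cancel (by omega : 1 ≤ n)]
  · rw [hT]
    push_cast [Nat.cast_sub (by omega : 1 ≤ n)]
    exact mul_div_cancel_right₀ _ (Nat.cast_ne_zero.mpr (NeZero.ne K'))

/-- For a `(K,L,M,N)` multi-antenna coded caching system with
`t = KM/N` an integer, `K = nt + (n-1)L` for an integer `n ≥ 2`, and `L ≥ t`,
a delivery time `T = (K-t)/(t+L) = n-1` is achievable with subpacketization
`K/gcd(K,t,L)`: with `γ = gcd(K,t,L)` there is a `(K, L, K/γ, t/γ, (n-1)·K/γ)`
EPDA (an `(K/γ) × K` array, since `γ·(K/γ) = K`), whose scheme has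
subpacketization `K/γ` and delivery time `S/F = ((n-1)·K/γ)/(K/γ) = n-1`. -/
theorem stmt14 (K L M N t n γ : ℕ) (hn : 2 ≤ n) (hN : 0 < N) (hM : 0 < M)
    (ht0 : 0 < t) (ht : t * N = K * M) (hK : K = n * t + (n - 1) * L) (hLt : t ≤ L)
    (hγ : γ = Nat.gcd K (Nat.gcd t L)) :
    γ * (K / γ) = K ∧
    (∃ B : Fin (K / γ) → Fin (γ * (K / γ)) → Option (Fin ((n - 1) * (K / γ))),
      IsEPDA L (t / γ) B) ∧
    (((n - 1) * (K / γ) : ℕ) : ℚ) / ((K / γ : ℕ) : ℚ) = ((K : ℚ) - t) / ((t : ℚ) + L) ∧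
    ((K : ℚ) - t) / ((t : ℚ) + L) = (n : ℚ) - 1 :=
  stmt14_general K L t n γ hn ht0 hK hLt hγ
end

section
/- If g-regularity of a (K,L,F,Z,S) EPDA holds and Z/F = t/K for an integer t, then the delivery time T = S/F of the associated scheme equals (K/g)(1 - Z/F) = (K-t)/g, and g ≤ t + L; in particular T ≥ (K-t)/(t+L). -/
open scoped Classical

/-!
Double counting. Since no integer repeats in a column, each integer occupies exactly `g`
columns, and counting the non-star entries by value and by column gives `S g + K Z = F K`,
i.e. `S g = (K - t) F`. For `g ≤ t + L`: in any row `j` containing some integer `s`, the `g`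
columns of `s` hold either a star of row `j` or one of the at most `L` integers of row `j` in
the subarray of `s`, so row `j` has at least `g - L` stars; summing over the rows,
`F (g - L) ≤ K Z = t F`.
-/

open Finset

namespace EPDA

variable {K F S g : ℕ} (A : Fin F → Fin K → Option (Fin S))

theorem card_stars_eq_sum_columns :
    #{p : Fin F × Fin K | A p.1 p.2 = none} = ∑ k, #{j | A j k = none} := by
  simp only [card_filter]
  rw [Fintype.sum_prod_type, sum_comm]

theorem card_stars_eq_sum_rows :
    #{p : Fin F × Fin K | A p.1 p.2 = none} = ∑ j, #{k | A j k = none} := by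
  simp only [card_filter]
  rw [Fintype.sum_prod_type]

theorem card_stars_of_column_count {Z : ℕ} (hcol : ∀ k, #{j | A j k = none} = Z) :
    #{p : Fin F × Fin K | A p.1 p.2 = none} = K * Z := by
  simp [card_stars_eq_sum_columns, hcol]

theorem card_mul_add_card_stars (hg : IsRegularEPDA g A) :
    S * g + #{p : Fin F × Fin K | A p.1 p.2 = none} = F * K := by
  have hfib := card_eq_sum_card_fiberwise (s := univ) (t := univ)
    (f := fun p : Fin F × Fin K => A p.1 p.2) (fun _ _ => mem_coe.2 (mem_univ _))
  rw [Fintype.sum_option] at hfib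
  simp only [card_univ, Fintype.card_prod, Fintype.card_fin] at hfib
  have hg' : ∀ s, #{p : Fin F × Fin K | A p.1 p.2 = some s} = g := hg
  simp [hfib, hg', add_comm]

theorem card_columns_containing (hcol : ∀ (k : Fin K) (j₁ j₂ : Fin F) (s : Fin S),
      A j₁ k = some s → A j₂ k = some s → j₁ = j₂)
    (hg : IsRegularEPDA g A) (s : Fin S) :
    #{k | ∃ j, A j k = some s} = g := by
  have himage : image Prod.snd {p : Fin F × Fin K | A p.1 p.2 = some s}
      = ({k | ∃ j, A j k = some s} : Finset (Fin K)) := by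
    ext k
    simp
  rw [← hg s, ← himage, card_image_of_injOn]
  rintro ⟨j₁, k⟩ hp ⟨j₂, k'⟩ hq (rfl : k = k')
  simp only [coe_filter, mem_univ, true_and, Set.mem_ofPred_eq] at hp hq
  rw [hcol k j₁ j₂ s hp hq]

theorem regular_le_num_columns (hcol : ∀ (k : Fin K) (j₁ j₂ : Fin F) (s : Fin S),
      A j₁ k = some s → A j₂ k = some s → j₁ = j₂)
    (hg : IsRegularEPDA g A) (s : Fin S) : g ≤ K :=
  card_columns_containing A hcol hg s ▸ (card_le_univ _).trans_eq (Fintype.card_fin K)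

theorem regular_le_add_card_row_stars {L Z : ℕ} (hA : IsEPDA L Z A) (hg : IsRegularEPDA g A)
    (hgK : g ≤ K) (j : Fin F) : g ≤ L + #{k | A j k = none} := by
  obtain ⟨-, -, hC3, hC4⟩ := hA
  by_cases hrow : ∃ k s, A j k = some s
  · obtain ⟨k₀, s, hk₀⟩ := hrow
    have hcover : univ.filter (fun k => ∃ j', A j' k = some s)
        ⊆ univ.filter (fun k => (∃ j', A j' k = some s) ∧ A j k ≠ none)
          ∪ univ.filter (fun k => A j k = none) := by
      intro k hk
      by_cases hstar : A j k = none <;> simp_all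
    calc g = #{k | ∃ j', A j' k = some s} := (card_columns_containing A hC3 hg s).symm
      _ ≤ _ := card_le_card hcover
      _ ≤ _ := card_union_le _ _
      _ ≤ L + #{k | A j k = none} := by gcongr; exact hC4 s j ⟨k₀, hk₀⟩
  · have hall : #{k | A j k = none} = K := by
      push Not at hrow
      rw [filter_true_of_mem fun k _ => Option.eq_none_iff_forall_ne_some.2 (hrow k),
        card_univ, Fintype.card_fin]
    omega

theorem card_rows_mul_regular_le {L Z : ℕ} (hA : IsEPDA L Z A) (hg : IsRegularEPDA g A)
    (hgK : g ≤ K) : F * g ≤ F * L + K * Z := by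
  have hrows := sum_le_sum fun j (_ : j ∈ univ) => regular_le_add_card_row_stars A hA hg hgK j
  rw [sum_add_distrib, ← card_stars_eq_sum_rows, card_stars_of_column_count A hA.1] at hrows
  simpa [mul_comm] using hrows

end EPDA

/-- For a `g`-regular `(K,L,F,Z,S)` EPDA with `Z/F = t/K` for an
integer `t`, the delivery time `T = S/F` of the associated scheme equals
`(K/g)(1 - Z/F) = (K-t)/g`, and `g ≤ t + L`; in particular
`T ≥ (K-t)/(t+L)`. -/
theorem stmt15 {K L F Z S g : ℕ} (t : ℕ) (A : Fin F → Fin K → Option (Fin S))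
    (hF : 0 < F) (hKpos : 0 < K) (hgpos : 0 < g) (hS : 0 < S)
    (hA : IsEPDA L Z A) (hg : IsRegularEPDA g A)
    (htZ : (Z : ℚ) / (F : ℚ) = (t : ℚ) / (K : ℚ)) :
    (S : ℚ) / F = (K : ℚ) / g * (1 - (Z : ℚ) / F) ∧
    (S : ℚ) / F = ((K : ℚ) - t) / g ∧
    g ≤ t + L ∧
    ((K : ℚ) - t) / ((t : ℚ) + L) ≤ (S : ℚ) / F := by
  have htF : (t * F : ℚ) = Z * K := by
    field_simp at htZ
    linarith
  have hcount : (S * g + K * Z : ℚ) = F * K := by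
    exact_mod_cast EPDA.card_stars_of_column_count A hA.1 ▸ EPDA.card_mul_add_card_stars A hg
  have hSg : (S : ℚ) * g = (K - t) * F := by linear_combination hcount + htF
  have hgtL : g ≤ t + L := by
    have hrows := EPDA.card_rows_mul_regular_le A hA hg
      (EPDA.regular_le_num_columns A hA.2.2.1 hg ⟨0, hS⟩)
    have htF' : t * F = Z * K := by exact_mod_cast htF
    exact Nat.le_of_mul_le_mul_left (by linarith) hF
  have hT : (S : ℚ) / F = ((K : ℚ) - t) / g := by
    rw [div_eq_div_iff (by positivity) (by positivity)]
    linarith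
  refine ⟨by rw [htZ, hT]; field_simp, hT, hgtL, ?_⟩
  have hKt : (0 : ℚ) ≤ K - t :=
    nonneg_of_mul_nonneg_left (hSg ▸ by positivity : (0 : ℚ) ≤ (K - t) * F) (by positivity)
  rw [hT]
  gcongr
  exact_mod_cast hgtL
end
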